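/- arXiv:2403.13525 — 8 statements merged into one kernel-verified Lean document; each statement's English description precedes it below -/
import Mathlib

section
/- Let F_θ(x) = (1/2)(1 - tanh(θ)·tanh(xθ/2)) for θ > 0. Then for all real a ≥ b ≥ 0, F_θ(a) + F_θ(-b) ≥ F_θ(a-b) + F_θ(0). -/
/-
With `x = (a - b)θ/2` and `y = bθ/2`, the difference of the two sides is
`(tanh θ / 2) (tanh x + tanh y - tanh (x + y))`, so the inequality is the subadditivity of
`tanh` on `[0, ∞)`, which follows from `tanh x + tanh y = sinh (x + y) / (cosh x cosh y)`
and `cosh x cosh y ≤ cosh (x + y)`.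
-/

/-- `F_θ(x) = (1/2)(1 - tanh(θ)·tanh(xθ/2))`. -/
noncomputable def Ftheta (θ x : ℝ) : ℝ :=
  (1 / 2) * (1 - Real.tanh θ * Real.tanh (x * θ / 2))

namespace Real

theorem tanh_nonneg {x : ℝ} (hx : 0 ≤ x) : 0 ≤ tanh x := by
  rw [tanh_eq_sinh_div_cosh]
  exact div_nonneg (sinh_nonneg_iff.2 hx) (cosh_pos x).le

theorem tanh_add_tanh (x y : ℝ) : tanh x + tanh y = sinh (x + y) / (cosh x * cosh y) := by
  have hx := (cosh_pos x).ne'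
  have hy := (cosh_pos y).ne'
  rw [tanh_eq_sinh_div_cosh, tanh_eq_sinh_div_cosh, sinh_add]
  field_simp

theorem tanh_add_le {x y : ℝ} (hx : 0 ≤ x) (hy : 0 ≤ y) : tanh (x + y) ≤ tanh x + tanh y := by
  rw [tanh_add_tanh, tanh_eq_sinh_div_cosh]
  have hcosh : cosh x * cosh y ≤ cosh (x + y) := by
    rw [cosh_add]
    exact le_add_of_nonneg_right (mul_nonneg (sinh_nonneg_iff.2 hx) (sinh_nonneg_iff.2 hy))
  exact div_le_div_of_nonneg_left (sinh_nonneg_iff.2 (add_nonneg hx hy))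
    (mul_pos (cosh_pos x) (cosh_pos y)) hcosh

end Real

theorem stmt_0 (θ : ℝ) (hθ : 0 < θ) (a b : ℝ) (hb : 0 ≤ b) (hab : b ≤ a) :
    Ftheta θ a + Ftheta θ (-b) ≥ Ftheta θ (a - b) + Ftheta θ 0 := by
  set x := (a - b) * θ / 2
  set y := b * θ / 2
  have hdiff : Ftheta θ a + Ftheta θ (-b) - (Ftheta θ (a - b) + Ftheta θ 0)
      = Real.tanh θ / 2 * (Real.tanh x + Real.tanh y - Real.tanh (x + y)) := by
    simp only [Ftheta, x, y, show (-b) * θ / 2 = -(b * θ / 2) by ring, zero_mul, zero_div,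
      Real.tanh_neg, Real.tanh_zero, show (a - b) * θ / 2 + b * θ / 2 = a * θ / 2 by ring]
    ring
  have hsub : Real.tanh (x + y) ≤ Real.tanh x + Real.tanh y :=
    Real.tanh_add_le (by positivity [sub_nonneg.2 hab]) (by positivity)
  have hprod := mul_nonneg (div_nonneg (Real.tanh_nonneg hθ.le) zero_le_two) (sub_nonneg.2 hsub)
  linarith
end

section
/- Let F_θ(x) = (1/2)(1 - tanh(θ)·tanh(xθ/2)) for θ > 0. Then for all real x ≥ 3, 4·F_θ(2x) > 3·F_θ(x). -/
open Real

lemma Real.tanh_eq_one_sub_exp_div_one_add_exp (y : ℝ) :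
    tanh y = (1 - exp (-2 * y)) / (1 + exp (-2 * y)) := by
  have hy : exp (-2 * y) = exp (-y) / exp y := by
    rw [← exp_sub]; ring_nf
  rw [tanh_eq, hy]
  field_simp

lemma one_sub_tanh_mul_tanh (a b : ℝ) :
    1 - tanh a * tanh b =
      2 * (exp (-2 * a) + exp (-2 * b)) / ((1 + exp (-2 * a)) * (1 + exp (-2 * b))) := by
  rw [tanh_eq_one_sub_exp_div_one_add_exp, tanh_eq_one_sub_exp_div_one_add_exp]
  field_simp
  ring

lemma Ftheta_eq (θ x : ℝ) :
    Ftheta θ x = (exp (-2 * θ) + exp (-(x * θ))) / (1 + exp (-(x * θ))) / (1 + exp (-2 * θ)) := by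
  rw [Ftheta, one_sub_tanh_mul_tanh, show -2 * (x * θ / 2) = -(x * θ) by ring]
  field_simp

lemma three_mul_div_lt_four_mul_div {p r : ℝ} (hr0 : 0 < r) (hr1 : r < 1) (hp : r ^ 2 ≤ p) :
    3 * ((p + r ^ 3) / (1 + r ^ 3)) < 4 * ((p + r ^ 6) / (1 + r ^ 6)) := by
  have hr2 : r ^ 2 < 1 := pow_lt_one₀ hr0.le hr1 (by norm_num)
  have hr3 : r ^ 3 < 1 := pow_lt_one₀ hr0.le hr1 (by norm_num)
  have hquartic : 0 < 4 - 3 * r ^ 2 + r ^ 3 := by nlinarith [pow_pos hr0 3]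
  have hcoeff : 0 ≤ 1 + 4 * r ^ 3 - 3 * r ^ 6 := by nlinarith [pow_pos hr0 3]
  have hdiff : 0 < p * (1 + 4 * r ^ 3 - 3 * r ^ 6) + r ^ 3 * (r ^ 6 + 4 * r ^ 3 - 3) :=
    calc 0 < r ^ 2 * ((1 + r) * (1 - 2 * r) ^ 2 + r ^ 4 * (4 - 3 * r ^ 2 + r ^ 3)) :=
          mul_pos (pow_pos hr0 2)
            (add_pos_of_nonneg_of_pos (by positivity) (mul_pos (pow_pos hr0 4) hquartic))
      _ = r ^ 2 * (1 + 4 * r ^ 3 - 3 * r ^ 6) + r ^ 3 * (r ^ 6 + 4 * r ^ 3 - 3) := by ring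
      _ ≤ p * (1 + 4 * r ^ 3 - 3 * r ^ 6) + r ^ 3 * (r ^ 6 + 4 * r ^ 3 - 3) := by gcongr
  rw [mul_div_assoc', mul_div_assoc', div_lt_div_iff₀ (by positivity) (by positivity)]
  linarith [show 4 * (p + r ^ 6) * (1 + r ^ 3) - 3 * (p + r ^ 3) * (1 + r ^ 6) =
    p * (1 + 4 * r ^ 3 - 3 * r ^ 6) + r ^ 3 * (r ^ 6 + 4 * r ^ 3 - 3) by ring]

theorem stmt_1 (θ : ℝ) (hθ : 0 < θ) (x : ℝ) (hx : 3 ≤ x) :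
    4 * Ftheta θ (2 * x) > 3 * Ftheta θ x := by
  set r := exp (-(x * θ) / 3)
  have hxθ : 0 < x * θ := by positivity
  have hr0 : 0 < r := exp_pos _
  have hr1 : r < 1 := exp_lt_one_iff.mpr (by linarith)
  have hrp : r ^ 2 ≤ exp (-2 * θ) := by
    rw [← exp_nat_mul]
    exact exp_le_exp.mpr (by push_cast; nlinarith)
  have hq : exp (-(x * θ)) = r ^ 3 := by rw [← exp_nat_mul]; push_cast; ring_nf
  have hq2 : exp (-(2 * x * θ)) = r ^ 6 := by rw [← exp_nat_mul]; push_cast; ring_nf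
  rw [Ftheta_eq, Ftheta_eq, hq, hq2, gt_iff_lt]
  simpa only [mul_div_assoc] using div_lt_div_of_pos_right
    (three_mul_div_lt_four_mul_div hr0 hr1 hrp) (by positivity : 0 < 1 + exp (-2 * θ))
end

section
/- For all real θ > 0 and x ≥ 3/2, the quantity 1 + 3·tanh(θ)·tanh(xθ) - 4·tanh(θ)·tanh(2xθ) is positive. -/
/-!
Put `s = xθ/3`. The expression is `1 + tanh θ · (3 tanh 3s - 4 tanh 6s)`, affine in `tanh θ`,
and `0 ≤ tanh θ ≤ tanh 2s` since `θ ≤ 2s` is `x ≥ 3/2`. It is `1` at `tanh θ = 0`, and at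
`tanh θ = tanh 2s` it equals, with `q = e^{2s} > 1`,
`2q²(q⁷ - 3q⁶ + 4q⁴ + 4q³ - 3q + 1) / ((q² + 1)(q³ + 1)(q⁶ + 1)) > 0`;
being affine, it is positive in between.
-/

open Real

lemma Real.tanh_eq_exp_two_mul (y : ℝ) : tanh y = (exp (2 * y) - 1) / (exp (2 * y) + 1) := by
  have hexp : exp (2 * y) = exp y * exp y := by rw [two_mul, exp_add]
  rw [tanh_eq, exp_neg, hexp]
  field_simp

lemma Real.tanh_le_tanh {x y : ℝ} (h : x ≤ y) : tanh x ≤ tanh y := by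
  have hmem (z : ℝ) : tanh z ∈ Set.Ioo (-1) 1 := ⟨neg_one_lt_tanh z, tanh_lt_one z⟩
  rwa [← artanh_le_artanh_iff (hmem x) (hmem y), artanh_tanh, artanh_tanh]

lemma Real.tanh_nonneg_s3 {x : ℝ} (hx : 0 ≤ x) : 0 ≤ tanh x :=
  tanh_zero ▸ tanh_le_tanh hx

lemma one_add_mul_pos_of_le {a b c : ℝ} (ha : 0 ≤ a) (hab : a ≤ b) (hb : 0 < 1 + b * c) :
    0 < 1 + a * c := by
  rcases le_or_gt 0 c with hc | hc <;> nlinarith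

lemma septic_pos_of_one_lt {q : ℝ} (hq : 1 < q) :
    0 < q ^ 7 - 3 * q ^ 6 + 4 * q ^ 4 + 4 * q ^ 3 - 3 * q + 1 := by
  obtain ⟨e, he, rfl⟩ : ∃ e, 0 < e ∧ q = 1 + e := ⟨q - 1, by linarith, by ring⟩
  nlinarith [sq_nonneg (e ^ 2 - e), sq_nonneg (e ^ 3 - e ^ 2), pow_pos he 3, pow_pos he 4,
    pow_pos he 5, pow_pos he 6, pow_pos he 7, pow_pos he 9]

lemma Real.tanh_nat_mul_eq (n : ℕ) (s : ℝ) :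
    tanh (n * s) = (exp (2 * s) ^ n - 1) / (exp (2 * s) ^ n + 1) := by
  rw [tanh_eq_exp_two_mul, ← exp_nat_mul, mul_left_comm]

lemma one_add_tanh_two_mul_mul_pos {s : ℝ} (hs : 0 < s) :
    0 < 1 + tanh (2 * s) * (3 * tanh (3 * s) - 4 * tanh (6 * s)) := by
  have h2 := tanh_nat_mul_eq 2 s
  have h3 := tanh_nat_mul_eq 3 s
  have h6 := tanh_nat_mul_eq 6 s
  push_cast at h2 h3 h6
  have hq : 1 < exp (2 * s) := one_lt_exp_iff.mpr (by linarith)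
  rw [h2, h3, h6]
  generalize exp (2 * s) = q at hq
  have hp := septic_pos_of_one_lt hq
  have hq0 : 0 < q := by linarith
  calc 0 < 2 * q ^ 2 * (q ^ 7 - 3 * q ^ 6 + 4 * q ^ 4 + 4 * q ^ 3 - 3 * q + 1)
        / ((q ^ 2 + 1) * (q ^ 3 + 1) * (q ^ 6 + 1)) := by positivity
    _ = _ := by field_simp; ring

theorem stmt_3 (θ x : ℝ) (hθ : 0 < θ) (hx : 3 / 2 ≤ x) :
    0 < 1 + 3 * Real.tanh θ * Real.tanh (x * θ) - 4 * Real.tanh θ * Real.tanh (2 * x * θ) := by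
  obtain ⟨s, hs, hxθ⟩ : ∃ s, 0 < s ∧ x * θ = 3 * s := ⟨x * θ / 3, by positivity, by ring⟩
  have hθs : θ ≤ 2 * s := by nlinarith
  rw [mul_assoc 2, hxθ, ← mul_assoc, show (2 : ℝ) * 3 = 6 by norm_num]
  have := one_add_mul_pos_of_le (tanh_nonneg_s3 hθ.le) (tanh_le_tanh hθs)
    (one_add_tanh_two_mul_mul_pos hs)
  linarith
end

section
/- For t > 1, the expression 1 + 3·tanh(θ)·tanh(3θ/2) - 4·tanh(θ)·tanh(3θ), where t = e^θ, equals 2((t-2)²t⁴ + (2t-1)²)t² / ((t⁴-t²+1)(t²-t+1)(t²+1)²), and in particular is strictly positive. -/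
lemma tanh_eq_exp (x : ℝ) : Real.tanh x = (Real.exp x ^ 2 - 1) / (Real.exp x ^ 2 + 1) := by
  rw [Real.tanh_eq_sinh_div_cosh, Real.sinh_eq, Real.cosh_eq, Real.exp_neg]
  have h := Real.exp_ne_zero x
  have h2 : Real.exp x ^ 2 + 1 ≠ 0 := by positivity
  field_simp

theorem stmt_4 (θ t : ℝ) (ht : t = Real.exp θ) (ht1 : 1 < t) :
    1 + 3 * Real.tanh θ * Real.tanh (3 * θ / 2) - 4 * Real.tanh θ * Real.tanh (3 * θ) =
      2 * ((t - 2) ^ 2 * t ^ 4 + (2 * t - 1) ^ 2) * t ^ 2 /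
        ((t ^ 4 - t ^ 2 + 1) * (t ^ 2 - t + 1) * (t ^ 2 + 1) ^ 2) ∧
    0 < 1 + 3 * Real.tanh θ * Real.tanh (3 * θ / 2) - 4 * Real.tanh θ * Real.tanh (3 * θ) := by
  have h1 : Real.tanh θ = (t ^ 2 - 1) / (t ^ 2 + 1) := by rw [tanh_eq_exp, ht]
  have ht3 : Real.exp (3 * θ / 2) ^ 2 = t ^ 3 := by
    rw [ht, ← Real.exp_nat_mul, ← Real.exp_nat_mul]
    norm_num
    ring_nf
  have ht6 : Real.exp (3 * θ) ^ 2 = t ^ 6 := by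
    rw [ht, ← Real.exp_nat_mul, ← Real.exp_nat_mul]
    norm_num
    ring_nf
  have h2 : Real.tanh (3 * θ / 2) = (t ^ 3 - 1) / (t ^ 3 + 1) := by
    rw [tanh_eq_exp, ht3]
  have h3 : Real.tanh (3 * θ) = (t ^ 6 - 1) / (t ^ 6 + 1) := by
    rw [tanh_eq_exp, ht6]
  have h0 : (0:ℝ) < t := by linarith
  have d1 : t ^ 2 + 1 ≠ 0 := by positivity
  have d2 : t ^ 3 + 1 ≠ 0 := by positivity
  have d3 : t ^ 6 + 1 ≠ 0 := by positivity
  have e1 : (0:ℝ) < t ^ 4 - t ^ 2 + 1 := by nlinarith [sq_nonneg (t ^ 2 - 1)]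
  have e2 : (0:ℝ) < t ^ 2 - t + 1 := by nlinarith
  have key : 1 + 3 * Real.tanh θ * Real.tanh (3 * θ / 2) - 4 * Real.tanh θ * Real.tanh (3 * θ) =
      2 * ((t - 2) ^ 2 * t ^ 4 + (2 * t - 1) ^ 2) * t ^ 2 /
        ((t ^ 4 - t ^ 2 + 1) * (t ^ 2 - t + 1) * (t ^ 2 + 1) ^ 2) := by
    rw [h1, h2, h3]
    have e1' : (t ^ 4 - t ^ 2 + 1) ≠ 0 := ne_of_gt e1
    have e2' : (t ^ 2 - t + 1) ≠ 0 := ne_of_gt e2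
    rw [eq_div_iff (mul_pos (mul_pos e1 e2) (by positivity)).ne']
    field_simp
    ring
  refine ⟨key, ?_⟩
  rw [key]
  have hn : (0:ℝ) < (t - 2) ^ 2 * t ^ 4 + (2 * t - 1) ^ 2 := by nlinarith
  positivity
end

section
/- Let A and B be nonnegative square matrices of the same size with A ≤ B entrywise and A ≠ B, and suppose B is irreducible. Then the spectral radius of A is strictly less than the spectral radius of B. -/
/-- Spectral radius of a real square matrix: the largest modulus of a complex eigenvalue
(root of the characteristic polynomial). -/
noncomputable def specRad {n : Type*} [Fintype n] [DecidableEq n] (A : Matrix n n ℝ) : ℝ :=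
  sSup {r : ℝ | ∃ μ : ℂ, (A.map (Complex.ofReal ·)).charpoly.IsRoot μ ∧ r = ‖μ‖}

/-- A nonnegative square matrix is irreducible (Perron–Frobenius sense) iff for all
indices `i j` some power has a positive `(i,j)` entry. -/
def MatIrreducible {n : Type*} [Fintype n] [DecidableEq n] (B : Matrix n n ℝ) : Prop :=
  ∀ i j, ∃ k : ℕ, 0 < (B ^ k) i j

open Matrix Polynomial Filter Topology
open scoped ENNReal NNReal
set_option linter.unusedSectionVars false
set_option linter.unusedVariables false
set_option maxHeartbeats 1000000

namespace PFaux


variable {n : Type*} [Fintype n] [DecidableEq n]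

noncomputable def cm (M : Matrix n n ℝ) : Matrix n n ℂ := M.map (Complex.ofReal ·)

lemma cm_eq (M : Matrix n n ℝ) : cm M = Complex.ofRealHom.mapMatrix M := rfl

lemma cm_apply (M : Matrix n n ℝ) (i j : n) : cm M i j = Complex.ofReal (M i j) := rfl

lemma cm_pow (M : Matrix n n ℝ) (k : ℕ) : cm (M ^ k) = (cm M) ^ k := by
  rw [cm_eq, cm_eq, map_pow]

def rootModSet (M : Matrix n n ℝ) : Set ℝ :=
  {r : ℝ | ∃ μ : ℂ, (cm M).charpoly.IsRoot μ ∧ r = ‖μ‖}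

lemma specRad_eq (M : Matrix n n ℝ) : specRad M = sSup (rootModSet M) := rfl

lemma rootModSet_finite (M : Matrix n n ℝ) : (rootModSet M).Finite := by
  have h1 : (rootModSet M) ⊆ (fun μ : ℂ => ‖μ‖) '' {μ | (cm M).charpoly.IsRoot μ} := by
    rintro r ⟨μ, h, rfl⟩; exact ⟨μ, h, rfl⟩
  exact ((Polynomial.finite_setOf_isRoot ((cm M).charpoly_monic.ne_zero)).image _).subset h1

variable [Nonempty n]

lemma rootModSet_nonempty (M : Matrix n n ℝ) : (rootModSet M).Nonempty := by
  obtain ⟨μ, hμ⟩ := IsAlgClosed.exists_root (cm M).charpoly (by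
    intro h
    have h2 := Polynomial.natDegree_eq_of_degree_eq_some h
    rw [Matrix.charpoly_natDegree_eq_dim] at h2
    exact Fintype.card_ne_zero h2)
  exact ⟨‖μ‖, μ, hμ, rfl⟩

lemma le_specRad {M : Matrix n n ℝ} {μ : ℂ} (h : (cm M).charpoly.IsRoot μ) :
    ‖μ‖ ≤ specRad M :=
  le_csSup (rootModSet_finite M).bddAbove ⟨μ, h, rfl⟩

lemma specRad_mem (M : Matrix n n ℝ) : specRad M ∈ rootModSet M :=
  Set.Nonempty.csSup_mem (rootModSet_nonempty M) (rootModSet_finite M)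

lemma specRad_nonneg (M : Matrix n n ℝ) : 0 ≤ specRad M := by
  obtain ⟨μ, _, h⟩ := specRad_mem M
  rw [specRad_eq] at h ⊢
  rw [h]; exact (norm_nonneg μ)

lemma eval_charpoly' (M : Matrix n n ℂ) (μ : ℂ) :
    M.charpoly.eval μ = (μ • (1 : Matrix n n ℂ) - M).det := by
  have h := RingHom.map_det (Polynomial.evalRingHom μ) (Matrix.charmatrix M)
  rw [Matrix.charpoly, ← Polynomial.coe_evalRingHom, h]
  congr 1
  ext i j
  by_cases hij : i = j
  · subst hij; simp [Matrix.charmatrix_apply, Matrix.one_apply, Matrix.diagonal_apply]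
  · simp [Matrix.charmatrix_apply, Matrix.one_apply, Matrix.diagonal_apply, hij]

lemma exists_eigenvector (M : Matrix n n ℝ) {μ : ℂ} (h : (cm M).charpoly.IsRoot μ) :
    ∃ v : n → ℂ, v ≠ 0 ∧ (cm M) *ᵥ v = μ • v := by
  have hdet : (μ • (1 : Matrix n n ℂ) - cm M).det = 0 := by
    rw [← eval_charpoly']; exact h
  obtain ⟨v, hv0, hv⟩ := (Matrix.exists_mulVec_eq_zero_iff).2 hdet
  refine ⟨v, hv0, ?_⟩
  rw [Matrix.sub_mulVec, Matrix.smul_mulVec, Matrix.one_mulVec, sub_eq_zero] at hv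
  exact hv.symm

lemma isRoot_of_mem_spectrum {M : Matrix n n ℝ} {μ : ℂ} (h : μ ∈ spectrum ℂ (cm M)) :
    (cm M).charpoly.IsRoot μ := by
  rw [spectrum.mem_iff] at h
  have hdet : (μ • (1 : Matrix n n ℂ) - cm M).det = 0 := by
    by_contra hd
    exact h (by
      rw [Algebra.algebraMap_eq_smul_one]
      exact (Matrix.isUnit_iff_isUnit_det _).2 (isUnit_iff_ne_zero.2 hd))
  rw [Polynomial.IsRoot, eval_charpoly', hdet]

-- entrywise nonneg powers
lemma pow_nonneg {B : Matrix n n ℝ} (hB : ∀ i j, 0 ≤ B i j) (k : ℕ) :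
    ∀ i j, 0 ≤ (B ^ k) i j := by
  induction k with
  | zero => intro i j; by_cases h : i = j <;> simp [Matrix.one_apply, h]
  | succ k ih =>
    intro i j
    rw [pow_succ, Matrix.mul_apply]
    exact Finset.sum_nonneg fun l _ => mul_nonneg (ih i l) (hB l j)

section Norm

attribute [local instance] Matrix.linftyOpNormedRing Matrix.linftyOpNormedAlgebra

noncomputable local instance : CompleteSpace (Matrix n n ℂ) := FiniteDimensional.complete ℂ _

/-- Collatz–Wielandt style lower bound via Gelfand's formula. -/
lemma cw_lower (B : Matrix n n ℝ) (hB : ∀ i j, 0 ≤ B i j) (v : n → ℝ) (hv : ∀ i, 0 ≤ v i)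
    (i0 : n) (hv0 : 0 < v i0) (c : ℝ) (hc : 0 ≤ c) (h : ∀ i, c * v i ≤ (B *ᵥ v) i) :
    c ≤ specRad B := by
  rcases eq_or_lt_of_le hc with rfl | hcpos
  · exact specRad_nonneg B
  -- iterated inequality
  have hiter : ∀ k : ℕ, ∀ i, c ^ k * v i ≤ ((B ^ k) *ᵥ v) i := by
    intro k
    induction k with
    | zero => intro i; simp [Matrix.one_mulVec]
    | succ k ih =>
      intro i
      have : (B ^ (k+1)) *ᵥ v = B *ᵥ ((B ^ k) *ᵥ v) := by
        rw [Matrix.mulVec_mulVec, pow_succ']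
      rw [this]
      have h1 : (B *ᵥ ((B ^ k) *ᵥ v)) i ≥ (B *ᵥ (fun j => c ^ k * v j)) i := by
        simp only [Matrix.mulVec, dotProduct]
        exact Finset.sum_le_sum fun j _ => mul_le_mul_of_nonneg_left (ih j) (hB i j)
      have h2 : (B *ᵥ (fun j => c ^ k * v j)) i = c ^ k * (B *ᵥ v) i := by
        simp only [Matrix.mulVec, dotProduct, Finset.mul_sum]
        exact Finset.sum_congr rfl fun j _ => by ring
      calc c ^ (k+1) * v i = c ^ k * (c * v i) := by ring
        _ ≤ c ^ k * (B *ᵥ v) i := by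
            exact mul_le_mul_of_nonneg_left (h i) (_root_.pow_nonneg hc k)
        _ = (B *ᵥ (fun j => c ^ k * v j)) i := h2.symm
        _ ≤ (B *ᵥ ((B ^ k) *ᵥ v)) i := h1
  -- max of v
  obtain ⟨V, hVmem, hVv⟩ : ∃ V, V ∈ Set.range v ∧ ∀ j, v j ≤ V := by
    obtain ⟨j0, hj0⟩ := Finset.exists_max_image Finset.univ v ⟨Classical.arbitrary n, Finset.mem_univ _⟩
    exact ⟨v j0, Set.mem_range_self _, fun j => hj0.2 j (Finset.mem_univ j)⟩
  have hV0 : 0 < V := lt_of_lt_of_le hv0 (hVv i0)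
  -- norm lower bound
  have hnorm : ∀ k : ℕ, c ^ k * (v i0 / V) ≤ (‖(cm B) ^ k‖₊ : ℝ) := by
    intro k
    have h1 : c ^ k * v i0 ≤ ((B ^ k) *ᵥ v) i0 := hiter k i0
    have h2 : ((B ^ k) *ᵥ v) i0 ≤ (∑ j, (B ^ k) i0 j) * V := by
      rw [Finset.sum_mul]
      exact Finset.sum_le_sum fun j _ =>
        mul_le_mul_of_nonneg_left (hVv j) (pow_nonneg hB k i0 j)
    have h3 : (∑ j, (B ^ k) i0 j) ≤ (‖(cm B) ^ k‖₊ : ℝ) := by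
      have hb : (∑ j, ‖((cm B) ^ k) i0 j‖₊) ≤ ‖(cm B) ^ k‖₊ := by
        rw [Matrix.linfty_opNNNorm_def]
        exact Finset.le_sup (f := fun i => ∑ j, ‖((cm B) ^ k) i j‖₊) (Finset.mem_univ i0)
      have hb2 := NNReal.coe_le_coe.2 hb
      rw [NNReal.coe_sum] at hb2
      refine le_trans (le_of_eq ?_) hb2
      refine Finset.sum_congr rfl fun j _ => ?_
      rw [← cm_pow, cm_apply, coe_nnnorm, Complex.norm_real, Real.norm_eq_abs,
        abs_of_nonneg (pow_nonneg hB k i0 j)]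
    calc c ^ k * (v i0 / V) ≤ ((∑ j, (B ^ k) i0 j) * V) * (1 / V) := by
          rw [div_eq_mul_one_div, ← mul_assoc]
          exact mul_le_mul_of_nonneg_right (h1.trans h2) (by positivity)
      _ = (∑ j, (B ^ k) i0 j) := by field_simp
      _ ≤ _ := h3
  -- pass to Gelfand
  have key : ∀ c' : ℝ, 0 < c' → c' < c → c' ≤ specRad B := by
    intro c' hc'0 hc'c
    have hr : (0:ℝ) < v i0 / V := by positivity
    have htnd : Tendsto (fun k : ℕ => (c'/c) ^ k) atTop (𝓝 0) :=
      tendsto_pow_atTop_nhds_zero_of_lt_one (by positivity) (by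
        rw [div_lt_one hcpos]; exact hc'c)
    have hev : ∀ᶠ k : ℕ in atTop, c' ^ k ≤ (‖(cm B) ^ k‖₊ : ℝ) := by
      filter_upwards [htnd.eventually_le_const hr] with k hk
      have : c' ^ k ≤ c ^ k * (v i0 / V) := by
        have := mul_le_mul_of_nonneg_left hk (le_of_lt (_root_.pow_pos hcpos k))
        calc c' ^ k = c ^ k * (c'/c) ^ k := by
              rw [← mul_pow, mul_div_cancel₀ _ (ne_of_gt hcpos)]
          _ ≤ c ^ k * (v i0 / V) := this
      exact this.trans (hnorm k)
    have hev2 : ∀ᶠ k : ℕ in atTop,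
        (c'.toNNReal : ℝ≥0∞) ≤ ((‖(cm B) ^ k‖₊ : ℝ≥0∞)) ^ (1/(k:ℝ)) := by
      filter_upwards [hev, Filter.eventually_gt_atTop 0] with k hk hk0
      have h1 : (c'.toNNReal : ℝ≥0∞) ^ (k : ℕ) ≤ ((‖(cm B) ^ k‖₊ : ℝ≥0∞)) := by
        rw [← ENNReal.coe_pow, ENNReal.coe_le_coe, ← NNReal.coe_le_coe, NNReal.coe_pow,
          Real.coe_toNNReal _ hc'0.le]
        exact hk
      have h2 := ENNReal.rpow_le_rpow h1 (by positivity : (0:ℝ) ≤ 1/(k:ℝ))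
      rwa [← ENNReal.rpow_natCast _ k, ← ENNReal.rpow_mul,
        mul_one_div_cancel (by exact_mod_cast hk0.ne'), ENNReal.rpow_one] at h2
    have hlim := spectrum.pow_nnnorm_pow_one_div_tendsto_nhds_spectralRadius (cm B)
    have hle : (c'.toNNReal : ℝ≥0∞) ≤ spectralRadius ℂ (cm B) :=
      ge_of_tendsto hlim hev2
    have hspec : spectralRadius ℂ (cm B) ≤ ENNReal.ofReal (specRad B) := by
      rw [spectralRadius]
      refine iSup₂_le fun μ hμ => ?_
      have h := le_specRad (isRoot_of_mem_spectrum hμ)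
      exact (le_of_eq (ofReal_norm μ).symm).trans (ENNReal.ofReal_le_ofReal h)
    have : ENNReal.ofReal c' ≤ ENNReal.ofReal (specRad B) := le_trans hle hspec
    exact (ENNReal.ofReal_le_ofReal_iff (specRad_nonneg B)).1 this
  by_contra hcon
  push_neg at hcon
  set c' := (max (specRad B) 0 + c) / 2 with hc'
  have hmaxlt : max (specRad B) 0 < c := max_lt hcon hcpos
  have h1 : 0 < c' := by
    have : (0:ℝ) ≤ max (specRad B) 0 := le_max_right _ _
    positivity
  have h2 : c' < c := by rw [hc']; linarith
  have h3 : specRad B < c' := by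
    have : specRad B ≤ max (specRad B) 0 := le_max_left _ _
    rw [hc']; linarith
  exact absurd (key c' h1 h2) (not_le.2 h3)

end Norm
/-- From a positive entry of a power, find a positive entry of `B` crossing out of `Sᶜ` into `S`. -/
lemma exists_edge {B : Matrix n n ℝ} (hB : ∀ i j, 0 ≤ B i j) (S : Set n) :
    ∀ (k : ℕ) (i j : n), 0 < (B ^ k) i j → i ∉ S → j ∈ S →
      ∃ i', i' ∉ S ∧ ∃ j', j' ∈ S ∧ 0 < B i' j' := by
  intro k
  induction k with
  | zero =>
    intro i j hpos hi hj
    by_cases hij : i = j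
    · exact absurd (hij ▸ hj) hi
    · simp [Matrix.one_apply, hij] at hpos
  | succ k ih =>
    intro i j hpos hi hj
    rw [pow_succ', Matrix.mul_apply] at hpos
    have hex : ∃ l, 0 < B i l * (B ^ k) l j := by
      by_contra hc
      push_neg at hc
      exact absurd (Finset.sum_nonpos fun l _ => hc l) (not_le.2 hpos)
    obtain ⟨l, hl⟩ := hex
    have hBil : 0 < B i l := by
      rcases lt_or_eq_of_le (hB i l) with h | h
      · exact h
      · rw [← h, zero_mul] at hl; exact absurd hl (lt_irrefl 0)
    have hBk : 0 < (B ^ k) l j := by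
      rcases lt_or_eq_of_le (pow_nonneg hB k l j) with h | h
      · exact h
      · rw [← h, mul_zero] at hl; exact absurd hl (lt_irrefl 0)
    by_cases hlS : l ∈ S
    · exact ⟨i, hi, l, hlS, hBil⟩
    · exact ih l j hBk hlS hj

lemma support_grow {B : Matrix n n ℝ} (hB : ∀ i j, 0 ≤ B i j) (hirr : MatIrreducible B) :
    ∀ (N : ℕ) (x : n → ℝ), (∀ i, 0 ≤ x i) → x ≠ 0 →
      (Finset.univ.filter fun i => ¬(0 < x i)).card ≤ N →
      ∃ m : ℕ, ∀ i, 0 < (((1 + B) ^ m) *ᵥ x) i := by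
  intro N
  induction N with
  | zero =>
    intro x hx hx0 hcard
    refine ⟨0, fun i => ?_⟩
    rw [pow_zero, Matrix.one_mulVec]
    by_contra hcon
    have : i ∈ Finset.univ.filter fun i => ¬(0 < x i) := by
      simp only [Finset.mem_filter, Finset.mem_univ, true_and]; exact hcon
    have := Finset.card_pos.2 ⟨i, this⟩
    omega
  | succ N ih =>
    intro x hx hx0 hcard
    by_cases hall : ∀ i, 0 < x i
    · exact ⟨0, fun i => by rw [pow_zero, Matrix.one_mulVec]; exact hall i⟩
    push_neg at hall
    obtain ⟨i0, hi0⟩ := hall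
    -- some positive entry of x
    obtain ⟨j0, hj0⟩ : ∃ j, x j ≠ 0 := Function.ne_iff.1 hx0
    have hj0pos : 0 < x j0 := lt_of_le_of_ne (hx j0) (Ne.symm hj0)
    set y := (1 + B) *ᵥ x with hy_def
    have hy_apply : ∀ i, y i = x i + (B *ᵥ x) i := by
      intro i
      rw [hy_def, Matrix.add_mulVec, Matrix.one_mulVec]
      rfl
    have hBx : ∀ i, 0 ≤ (B *ᵥ x) i := fun i =>
      Finset.sum_nonneg fun j _ => mul_nonneg (hB i j) (hx j)
    have hy : ∀ i, 0 ≤ y i := fun i => by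
      rw [hy_apply]; exact add_nonneg (hx i) (hBx i)
    have hpres : ∀ i, 0 < x i → 0 < y i := fun i hi => by
      rw [hy_apply]; exact add_pos_of_pos_of_nonneg hi (hBx i)
    -- a new positive index
    have hnew : ∃ i, ¬(0 < x i) ∧ 0 < y i := by
      set S : Set n := {i | 0 < x i} with hS
      have hi0S : i0 ∉ S := by simp [hS]; exact hi0
      have hj0S : j0 ∈ S := hj0pos
      obtain ⟨k, hk⟩ := hirr i0 j0
      obtain ⟨i', hi'S, j', hj'S, hBij⟩ := exists_edge hB S k i0 j0 hk hi0S hj0S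
      refine ⟨i', by simpa [hS] using hi'S, ?_⟩
      rw [hy_apply]
      have : 0 < (B *ᵥ x) i' := by
        have hterm : 0 < B i' j' * x j' := mul_pos hBij hj'S
        have := Finset.single_le_sum (f := fun j => B i' j * x j)
          (fun j _ => mul_nonneg (hB i' j) (hx j)) (Finset.mem_univ j')
        exact lt_of_lt_of_le hterm this
      exact add_pos_of_nonneg_of_pos (hx i') this
    obtain ⟨inew, hinew, hynew⟩ := hnew
    have hsubset : (Finset.univ.filter fun i => ¬(0 < y i)) ⊂
        (Finset.univ.filter fun i => ¬(0 < x i)) := by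
      constructor
      · intro i hi
        simp only [Finset.mem_filter, Finset.mem_univ, true_and] at hi ⊢
        intro hxi
        exact hi (hpres i hxi)
      · intro hsub
        have := hsub (by simp only [Finset.mem_filter, Finset.mem_univ, true_and]; exact hinew)
        simp only [Finset.mem_filter, Finset.mem_univ, true_and] at this
        exact this hynew
    have hcard' : (Finset.univ.filter fun i => ¬(0 < y i)).card ≤ N := by
      have := Finset.card_lt_card hsubset
      omega
    have hy0 : y ≠ 0 := by
      intro hcon
      rw [hcon] at hynew
      exact absurd hynew (lt_irrefl 0)
    obtain ⟨m, hm⟩ := ih y hy hy0 hcard'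
    refine ⟨m + 1, fun i => ?_⟩
    rw [pow_succ, ← Matrix.mulVec_mulVec]
    exact hm i

lemma eigen_pos {B : Matrix n n ℝ} (hB : ∀ i j, 0 ≤ B i j) (hirr : MatIrreducible B)
    {ρ : ℝ} (hρ : 0 ≤ ρ) {y : n → ℝ} (hy : ∀ i, 0 ≤ y i) (hy0 : y ≠ 0)
    (heig : B *ᵥ y = ρ • y) : ∀ i, 0 < y i := by
  have hstep : (1 + B) *ᵥ y = (1 + ρ) • y := by
    rw [Matrix.add_mulVec, Matrix.one_mulVec, heig, add_smul, one_smul]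
  have hiter : ∀ m : ℕ, ((1 + B) ^ m) *ᵥ y = (1 + ρ) ^ m • y := by
    intro m
    induction m with
    | zero => simp [Matrix.one_mulVec]
    | succ m ihm =>
      rw [pow_succ, ← Matrix.mulVec_mulVec, hstep, Matrix.mulVec_smul, ihm, smul_smul,
        pow_succ]
      ring_nf
  obtain ⟨m, hm⟩ := support_grow hB hirr (Finset.univ.filter fun i => ¬(0 < y i)).card y hy hy0
    le_rfl
  intro i
  have := hm i
  rw [hiter m] at this
  simp only [Pi.smul_apply, smul_eq_mul] at this
  nlinarith [pow_pos (by linarith : (0:ℝ) < 1 + ρ) m, hy i]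

lemma abs_subinv (M : Matrix n n ℝ) (hM : ∀ i j, 0 ≤ M i j) {μ : ℂ} {w : n → ℂ}
    (hw : cm M *ᵥ w = μ • w) (i : n) :
    ‖μ‖ * ‖w i‖ ≤ (M *ᵥ fun j => ‖w j‖) i := by
  have h1 : ‖μ‖ * ‖w i‖ = ‖(cm M *ᵥ w) i‖ := by
    rw [hw]
    simp only [Pi.smul_apply, smul_eq_mul]
    rw [norm_mul]
  rw [h1]
  have h2 : (cm M *ᵥ w) i = ∑ j, cm M i j * w j := rfl
  rw [h2]
  refine le_trans (norm_sum_le _ _) ?_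
  have : ∀ j, ‖cm M i j * w j‖ = M i j * ‖w j‖ := by
    intro j
    rw [norm_mul, cm_apply, Complex.norm_real, Real.norm_eq_abs,
      abs_of_nonneg (hM i j)]
  exact le_of_eq (Finset.sum_congr rfl fun j _ => this j)

lemma diag_ge_one {B : Matrix n n ℝ} (hB : ∀ i j, 0 ≤ B i j) (m : ℕ) (i : n) :
    1 ≤ ((1 + B) ^ m) i i := by
  have h1B : ∀ i j, 0 ≤ (1 + B) i j := by
    intro i j
    by_cases h : i = j
    · subst h; simp only [Matrix.add_apply, Matrix.one_apply_eq]; linarith [hB i i]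
    · simp only [Matrix.add_apply, Matrix.one_apply_ne h]; linarith [hB i j]
  induction m with
  | zero => simp
  | succ m ihm =>
    rw [pow_succ, Matrix.mul_apply]
    have hterm : 1 ≤ ((1 + B) ^ m) i i * (1 + B) i i := by
      have : (1:ℝ) ≤ (1 + B) i i := by
        simp only [Matrix.add_apply, Matrix.one_apply_eq]; linarith [hB i i]
      nlinarith
    refine le_trans hterm (Finset.single_le_sum (f := fun l => ((1 + B) ^ m) i l * (1 + B) l i)
      (fun l _ => mul_nonneg (pow_nonneg h1B m i l) (h1B l i)) (Finset.mem_univ i))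

/-- Existence of a nonnegative eigenvector with eigenvalue `specRad B`. -/
lemma perron {B : Matrix n n ℝ} (hB : ∀ i j, 0 ≤ B i j) (hirr : MatIrreducible B) :
    ∃ y : n → ℝ, (∀ i, 0 ≤ y i) ∧ y ≠ 0 ∧ B *ᵥ y = (specRad B) • y := by
  obtain ⟨μ, hroot, habs⟩ := specRad_mem B
  obtain ⟨w, hw0, hw⟩ := exists_eigenvector B hroot
  set x : n → ℝ := fun i => ‖w i‖ with hx_def
  have hx : ∀ i, 0 ≤ x i := fun i => norm_nonneg _
  have hx0 : x ≠ 0 := by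
    intro hcon
    apply hw0
    funext i
    have : x i = 0 := by rw [hcon]; rfl
    rw [hx_def] at this
    simpa using this
  have hsub : ∀ i, specRad B * x i ≤ (B *ᵥ x) i := by
    intro i
    rw [habs]
    exact abs_subinv B hB hw i
  set z : n → ℝ := fun i => (B *ᵥ x) i - specRad B * x i with hz_def
  have hz : ∀ i, 0 ≤ z i := fun i => by rw [hz_def]; simp only; linarith [hsub i]
  by_cases hz0 : z = 0
  · refine ⟨x, hx, hx0, ?_⟩
    funext i
    have : z i = 0 := by rw [hz0]; rfl
    rw [hz_def] at this
    simp only at this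
    simp only [Pi.smul_apply, smul_eq_mul]
    linarith
  · exfalso
    obtain ⟨m, hm⟩ := support_grow hB hirr
      (Finset.univ.filter fun i => ¬(0 < z i)).card z hz hz0 le_rfl
    set u : n → ℝ := ((1 + B) ^ m) *ᵥ z with hu_def
    set v : n → ℝ := ((1 + B) ^ m) *ᵥ x with hv_def
    have h1B : ∀ i j, 0 ≤ (1 + B) i j := by
      intro i j
      by_cases h : i = j
      · subst h; simp only [Matrix.add_apply, Matrix.one_apply_eq]; linarith [hB i i]
      · simp only [Matrix.add_apply, Matrix.one_apply_ne h]; linarith [hB i j]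
    have hv_nonneg : ∀ i, 0 ≤ v i := fun i =>
      Finset.sum_nonneg fun j _ => mul_nonneg (pow_nonneg h1B m i j) (hx j)
    -- v has positive entry
    obtain ⟨j0, hj0⟩ : ∃ j, x j ≠ 0 := Function.ne_iff.1 hx0
    have hj0pos : 0 < x j0 := lt_of_le_of_ne (hx j0) (Ne.symm hj0)
    have hvj0 : 0 < v j0 := by
      have hterm : x j0 ≤ ((1 + B) ^ m) j0 j0 * x j0 := by
        nlinarith [diag_ge_one hB m j0, hj0pos]
      have hsum := Finset.single_le_sum (f := fun j => ((1 + B) ^ m) j0 j * x j)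
        (fun j _ => mul_nonneg (pow_nonneg h1B m j0 j) (hx j)) (Finset.mem_univ j0)
      calc (0:ℝ) < x j0 := hj0pos
        _ ≤ ((1 + B) ^ m) j0 j0 * x j0 := hterm
        _ ≤ ∑ j, ((1 + B) ^ m) j0 j * x j := hsum
        _ = v j0 := rfl
    -- key identity : B *ᵥ v = specRad B • v + u
    have hcomm : B * (1 + B) ^ m = (1 + B) ^ m * B := by
      have : Commute B ((1 + B) ^ m) := (Commute.add_right (Commute.one_right B)
        (Commute.refl B)).pow_right m
      exact this
    have hBx_eq : B *ᵥ x = fun i => specRad B * x i + z i := by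
      funext i
      rw [hz_def]
      simp only
      ring
    have hkey : B *ᵥ v = fun i => specRad B * v i + u i := by
      rw [hv_def, Matrix.mulVec_mulVec, hcomm, ← Matrix.mulVec_mulVec, hBx_eq]
      funext i
      have : (((1 + B) ^ m) *ᵥ fun i => specRad B * x i + z i) i
          = (((1 + B) ^ m) *ᵥ fun i => specRad B * x i) i + (((1 + B) ^ m) *ᵥ z) i := by
        simp only [Matrix.mulVec, dotProduct]
        rw [← Finset.sum_add_distrib]
        exact Finset.sum_congr rfl fun j _ => by ring
      rw [this]
      congr 1
      have : (((1 + B) ^ m) *ᵥ fun i => specRad B * x i) i = specRad B * v i := by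
        rw [hv_def]
        simp only [Matrix.mulVec, dotProduct, Finset.mul_sum]
        exact Finset.sum_congr rfl fun j _ => by ring
      rw [this]
    have hu_pos : ∀ i, 0 < u i := hm
    -- choose ε
    obtain ⟨iu, _, hiu⟩ := Finset.exists_min_image Finset.univ u
      ⟨Classical.arbitrary n, Finset.mem_univ _⟩
    obtain ⟨iv, _, hiv⟩ := Finset.exists_max_image Finset.univ v
      ⟨Classical.arbitrary n, Finset.mem_univ _⟩
    set ε : ℝ := u iu / (v iv + 1) with hε_def
    have hviv : 0 < v iv := lt_of_lt_of_le hvj0 (hiv j0 (Finset.mem_univ j0))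
    have hε_pos : 0 < ε := div_pos (hu_pos iu) (by linarith)
    have hεv : ∀ i, ε * v i ≤ u i := by
      intro i
      have h1 : ε * v i ≤ ε * v iv := by
        exact mul_le_mul_of_nonneg_left (hiv i (Finset.mem_univ i)) hε_pos.le
      have h2 : ε * v iv < u iu := by
        rw [hε_def]
        rw [div_mul_eq_mul_div, div_lt_iff₀ (by linarith : (0:ℝ) < v iv + 1)]
        nlinarith [hu_pos iu]
      exact h1.trans (h2.le.trans (hiu i (Finset.mem_univ i)))
    have hcw := cw_lower B hB v hv_nonneg j0 hvj0 (specRad B + ε)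
      (by linarith [specRad_nonneg B, hε_pos])
      (by
        intro i
        have h := congrFun hkey i
        rw [h]
        nlinarith [hεv i, hv_nonneg i])
    linarith

lemma charpoly_transpose (M : Matrix n n ℂ) : Mᵀ.charpoly = M.charpoly := by
  rw [Matrix.charpoly, Matrix.charpoly, ← Matrix.det_transpose (Matrix.charmatrix M)]
  congr 1
  ext i j
  by_cases h : i = j
  · subst h; simp [Matrix.charmatrix_apply, Matrix.transpose_apply]
  · simp [Matrix.charmatrix_apply, Matrix.transpose_apply, Matrix.diagonal_apply, h,
      Ne.symm h]

lemma cm_transpose (M : Matrix n n ℝ) : cm Mᵀ = (cm M)ᵀ := rfl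

lemma specRad_transpose (M : Matrix n n ℝ) : specRad Mᵀ = specRad M := by
  unfold specRad
  congr 1
  ext r
  constructor
  · rintro ⟨μ, h, rfl⟩
    refine ⟨μ, ?_, rfl⟩
    rwa [show (Mᵀ.map (Complex.ofReal ·)) = (M.map (Complex.ofReal ·))ᵀ from rfl,
      charpoly_transpose] at h
  · rintro ⟨μ, h, rfl⟩
    refine ⟨μ, ?_, rfl⟩
    rwa [show (Mᵀ.map (Complex.ofReal ·)) = (M.map (Complex.ofReal ·))ᵀ from rfl,
      charpoly_transpose]

lemma irr_transpose {B : Matrix n n ℝ} (h : MatIrreducible B) : MatIrreducible Bᵀ := by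
  intro i j
  obtain ⟨k, hk⟩ := h j i
  exact ⟨k, by rwa [← Matrix.transpose_pow, Matrix.transpose_apply]⟩


end PFaux

open PFaux in

theorem stmt_7 {n : Type*} [Fintype n] [DecidableEq n] [Nonempty n]
    (A B : Matrix n n ℝ)
    (hA : ∀ i j, 0 ≤ A i j) (hAB : ∀ i j, A i j ≤ B i j) (hne : A ≠ B)
    (hirr : MatIrreducible B) :
    specRad A < specRad B := by
  have hB : ∀ i j, 0 ≤ B i j := fun i j => (hA i j).trans (hAB i j)
  -- left Perron eigenvector of B (eigenvector of Bᵀ)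
  obtain ⟨y, hy, hy0, hyeig⟩ := perron (B := Bᵀ)
    (fun i j => hB j i) (irr_transpose hirr)
  rw [specRad_transpose] at hyeig
  have hypos : ∀ i, 0 < y i := eigen_pos (fun i j => hB j i) (irr_transpose hirr)
    (specRad_nonneg B) hy hy0 hyeig
  -- eigenvector of A achieving specRad A
  obtain ⟨μ, hroot, habs⟩ := specRad_mem A
  obtain ⟨w, hw0, hw⟩ := exists_eigenvector A hroot
  set x : n → ℝ := fun i => ‖w i‖ with hx_def
  have hx : ∀ i, 0 ≤ x i := fun i => norm_nonneg _
  have hx0 : x ≠ 0 := by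
    intro hcon
    apply hw0
    funext i
    have : x i = 0 := by rw [hcon]; rfl
    rw [hx_def] at this
    simpa using this
  have hsub : ∀ i, specRad A * x i ≤ (A *ᵥ x) i := by
    intro i
    rw [habs]
    exact abs_subinv A hA hw i
  obtain ⟨j0, hj0⟩ : ∃ j, x j ≠ 0 := Function.ne_iff.1 hx0
  have hj0pos : 0 < x j0 := lt_of_le_of_ne (hx j0) (Ne.symm hj0)
  -- pairing
  have hAx_le_Bx : ∀ i, (A *ᵥ x) i ≤ (B *ᵥ x) i := fun i =>
    Finset.sum_le_sum fun j _ => mul_le_mul_of_nonneg_right (hAB i j) (hx j)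
  have hd : 0 < ∑ i, y i * x i := by
    have hterm : 0 < y j0 * x j0 := mul_pos (hypos j0) hj0pos
    have hs := Finset.single_le_sum (f := fun i => y i * x i)
      (fun i _ => mul_nonneg (hy i) (hx i)) (Finset.mem_univ j0)
    calc (0:ℝ) < y j0 * x j0 := hterm
      _ ≤ ∑ i, y i * x i := hs
  have h1 : ∑ i, y i * (B *ᵥ x) i = specRad B * ∑ i, y i * x i := by
    have : ∑ i, y i * (B *ᵥ x) i = ∑ j, (Bᵀ *ᵥ y) j * x j := by
      simp only [Matrix.mulVec, dotProduct, Matrix.transpose_apply, Finset.mul_sum,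
        Finset.sum_mul]
      rw [Finset.sum_comm]
      exact Finset.sum_congr rfl fun i _ => Finset.sum_congr rfl fun j _ => by ring
    rw [this, hyeig]
    simp only [Pi.smul_apply, smul_eq_mul, Finset.mul_sum]
    exact Finset.sum_congr rfl fun j _ => by ring
  have h2 : ∑ i, y i * (A *ᵥ x) i ≤ ∑ i, y i * (B *ᵥ x) i :=
    Finset.sum_le_sum fun i _ => mul_le_mul_of_nonneg_left (hAx_le_Bx i) (hy i)
  have h3 : specRad A * ∑ i, y i * x i ≤ ∑ i, y i * (A *ᵥ x) i := by
    rw [Finset.mul_sum]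
    refine Finset.sum_le_sum fun i _ => ?_
    have := mul_le_mul_of_nonneg_left (hsub i) (hy i)
    nlinarith [this]
  have hle : specRad A ≤ specRad B := by
    have : specRad A * ∑ i, y i * x i ≤ specRad B * ∑ i, y i * x i := by
      calc specRad A * ∑ i, y i * x i ≤ ∑ i, y i * (A *ᵥ x) i := h3
        _ ≤ ∑ i, y i * (B *ᵥ x) i := h2
        _ = specRad B * ∑ i, y i * x i := h1
    exact le_of_mul_le_mul_right this hd
  rcases lt_or_eq_of_le hle with h | heq
  · exact h
  exfalso
  -- equality case
  have he2 : ∑ i, y i * (A *ᵥ x) i = ∑ i, y i * (B *ᵥ x) i := by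
    have hup : ∑ i, y i * (B *ᵥ x) i = specRad A * ∑ i, y i * x i := by
      rw [h1, ← heq]
    linarith [h2, h3, hup ▸ h3]
  have he3 : ∑ i, y i * (A *ᵥ x) i = specRad A * ∑ i, y i * x i := by
    have hup : ∑ i, y i * (B *ᵥ x) i = specRad A * ∑ i, y i * x i := by rw [h1, ← heq]
    linarith [h2, h3]
  -- termwise equalities
  have heBA : ∀ i, (A *ᵥ x) i = (B *ᵥ x) i := by
    have hzero : ∑ i, y i * ((B *ᵥ x) i - (A *ᵥ x) i) = 0 := by
      simp only [mul_sub]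
      rw [Finset.sum_sub_distrib]
      linarith [he2]
    have hterms := (Finset.sum_eq_zero_iff_of_nonneg (fun i _ =>
      mul_nonneg (hy i) (by linarith [hAx_le_Bx i]))).1 hzero
    intro i
    have h := hterms i (Finset.mem_univ i)
    rcases mul_eq_zero.1 h with h' | h'
    · exact absurd h' (ne_of_gt (hypos i))
    · linarith
  have heA : ∀ i, (A *ᵥ x) i = specRad A * x i := by
    have hzero : ∑ i, y i * ((A *ᵥ x) i - specRad A * x i) = 0 := by
      simp only [mul_sub]
      rw [Finset.sum_sub_distrib]
      have : ∑ i, y i * (specRad A * x i) = specRad A * ∑ i, y i * x i := by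
        rw [Finset.mul_sum]
        exact Finset.sum_congr rfl fun i _ => by ring
      rw [this]
      linarith [he3]
    have hterms := (Finset.sum_eq_zero_iff_of_nonneg (fun i _ =>
      mul_nonneg (hy i) (by linarith [hsub i]))).1 hzero
    intro i
    have h := hterms i (Finset.mem_univ i)
    have hyi := hypos i
    have hor := mul_eq_zero.1 h
    rcases hor with h' | h'
    · exact absurd h' (ne_of_gt hyi)
    · linarith
  -- x is eigenvector of B
  have hBeig : B *ᵥ x = specRad B • x := by
    funext i
    rw [← heBA i, heA i, heq]
    simp [Pi.smul_apply, smul_eq_mul]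
  have hxpos : ∀ i, 0 < x i := eigen_pos hB hirr (specRad_nonneg B) hx hx0 hBeig
  -- find strict entry
  obtain ⟨p, hp⟩ : ∃ p, A p ≠ B p := Function.ne_iff.1 hne
  obtain ⟨q, hq⟩ : ∃ q, A p q ≠ B p q := Function.ne_iff.1 hp
  have hpq : A p q < B p q := lt_of_le_of_ne (hAB p q) hq
  -- contradiction from (B-A) x = 0 at row p
  have : (A *ᵥ x) p < (B *ᵥ x) p := by
    have hstrict : A p q * x q < B p q * x q := by
      exact mul_lt_mul_of_pos_right hpq (hxpos q)
    refine Finset.sum_lt_sum (fun j _ => mul_le_mul_of_nonneg_right (hAB p j) (hx j))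
      ⟨q, Finset.mem_univ q, hstrict⟩
  linarith [heBA p]
end

section
/- Let G be a connected simple graph with f-adjacency matrix A_f(G), where f(x,y) > 0 is symmetric and increasing in each variable. Let ρ = ρ_f(G) with positive principal eigenvector x. Let v be a vertex of degree 2 with neighbors v₂ and v₃ such that v₂v₃ ∈ E(G). Then x_v ≤ x_{v₂} and x_v ≤ x_{v₃}. -/
open scoped Classical

/-- The degree-based weighted (`f`-)adjacency matrix of a graph. -/
noncomputable def fAdj {V : Type*} [Fintype V] [DecidableEq V] (G : SimpleGraph V)
    (f : ℝ → ℝ → ℝ) : Matrix V V ℝ :=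
  fun i j => if G.Adj i j then f (G.degree i) (G.degree j) else 0

lemma aux_stmt_8 {V : Type*} [Fintype V] [DecidableEq V]
    (G : SimpleGraph V)
    (f : ℝ → ℝ → ℝ)
    (hpos : ∀ x y : ℝ, 0 < x → 0 < y → 0 < f x y)
    (hsymm : ∀ x y : ℝ, f x y = f y x)
    (hmono : ∀ y : ℝ, Monotone fun x => f x y)
    (x : V → ℝ) (hxpos : ∀ i, 0 < x i)
    (heig : (fAdj G f).mulVec x = specRad (fAdj G f) • x)
    (v w u : V) (hdeg : G.degree v = 2)
    (hvw : G.Adj v w) (hvu : G.Adj v u) (hwu : w ≠ u)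
    (hadj : G.Adj w u) :
    x v ≤ x w := by
  set ρ := specRad (fAdj G f) with hρdef
  have key : ∀ i, ∑ j, fAdj G f i j * x j = ρ * x i := by
    intro i
    have := congrFun heig i
    simpa [Matrix.mulVec, dotProduct] using this
  -- degrees of adjacent vertices are positive
  have degpos : ∀ {a b : V}, G.Adj a b → 0 < (G.degree a : ℝ) := by
    intro a b hab
    have : 0 < G.degree a := by
      rw [G.degree_pos_iff_exists_adj]; exact ⟨b, hab⟩
    exact_mod_cast this
  have entry_nonneg : ∀ i j, 0 ≤ fAdj G f i j := by
    intro i j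
    unfold fAdj
    split
    · next h => exact le_of_lt (hpos _ _ (degpos h) (degpos h.symm))
    · exact le_refl 0
  -- neighbors of v are exactly {w, u}
  have hNv : ({w, u} : Finset V) = G.neighborFinset v := by
    apply Finset.eq_of_subset_of_card_le
    · intro a ha
      simp only [Finset.mem_insert, Finset.mem_singleton] at ha
      rcases ha with rfl | rfl
      · exact (G.mem_neighborFinset v a).2 hvw
      · exact (G.mem_neighborFinset v a).2 hvu
    · rw [G.card_neighborFinset_eq_degree, hdeg, Finset.card_insert_of_notMem (by simpa using hwu),
        Finset.card_singleton]
  -- eigen-equation at v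
  have hv : ρ * x v = fAdj G f v w * x w + fAdj G f v u * x u := by
    rw [← key v]
    rw [← Finset.sum_subset (Finset.subset_univ (G.neighborFinset v))
      (fun j _ hj => by
        rw [G.mem_neighborFinset] at hj
        simp [fAdj, hj])]
    rw [← hNv, Finset.sum_pair hwu]
  -- 2 ≤ degree w
  have hdw : (2 : ℝ) ≤ (G.degree w : ℝ) := by
    have hsub : ({v, u} : Finset V) ⊆ G.neighborFinset w := by
      intro a ha
      simp only [Finset.mem_insert, Finset.mem_singleton] at ha
      rcases ha with rfl | rfl
      · exact (G.mem_neighborFinset w a).2 hvw.symm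
      · exact (G.mem_neighborFinset w a).2 hadj
    have hcard : 2 ≤ G.degree w := by
      have := Finset.card_le_card hsub
      rwa [Finset.card_insert_of_notMem (by simpa using hvu.ne), Finset.card_singleton,
        G.card_neighborFinset_eq_degree] at this
    exact_mod_cast hcard
  -- lower bound on eigen-equation at w
  have hw : fAdj G f w v * x v + fAdj G f w u * x u ≤ ρ * x w := by
    calc fAdj G f w v * x v + fAdj G f w u * x u
        = ∑ j ∈ ({v, u} : Finset V), fAdj G f w j * x j := by rw [Finset.sum_pair hvu.ne]
      _ ≤ ∑ j, fAdj G f w j * x j := by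
          apply Finset.sum_le_sum_of_subset_of_nonneg (Finset.subset_univ _)
          intro j _ _
          exact mul_nonneg (entry_nonneg w j) (le_of_lt (hxpos j))
      _ = ρ * x w := key w
  -- identify entries
  have hdvc : (G.degree v : ℝ) = 2 := by rw [hdeg]; norm_num
  have hvwE : fAdj G f v w = f 2 (G.degree w) := by
    simp [fAdj, hvw, hdvc]
  have hwvE : fAdj G f w v = f 2 (G.degree w) := by
    simp [fAdj, hvw.symm, hdvc, hsymm (G.degree w : ℝ) 2]
  have hvuE : fAdj G f v u = f 2 (G.degree u) := by
    simp [fAdj, hvu, hdvc]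
  have hwuE : f 2 (G.degree u) ≤ fAdj G f w u := by
    simp only [fAdj, hadj, if_true]
    exact hmono (G.degree u : ℝ) hdw
  have ha : 0 < f 2 (G.degree w : ℝ) := hpos _ _ (by norm_num) (degpos hvw.symm)
  have hb : 0 < f 2 (G.degree u : ℝ) := hpos _ _ (by norm_num) (degpos hvu.symm)
  have hxw := hxpos w
  have hxu := hxpos u
  have hxv := hxpos v
  rw [hvwE, hvuE] at hv
  rw [hwvE] at hw
  have hw' : f 2 (G.degree w) * x v + f 2 (G.degree u) * x u ≤ ρ * x w := by
    have : f 2 (G.degree u) * x u ≤ fAdj G f w u * x u :=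
      mul_le_mul_of_nonneg_right hwuE (le_of_lt hxu)
    linarith
  have hρpos : 0 < ρ := by nlinarith
  nlinarith [mul_pos hρpos hxv]

theorem stmt_8 {V : Type*} [Fintype V] [DecidableEq V]
    (G : SimpleGraph V) (hconn : G.Connected)
    (f : ℝ → ℝ → ℝ)
    (hpos : ∀ x y : ℝ, 0 < x → 0 < y → 0 < f x y)
    (hsymm : ∀ x y : ℝ, f x y = f y x)
    (hmono : ∀ y : ℝ, Monotone fun x => f x y)
    (x : V → ℝ) (hxpos : ∀ i, 0 < x i)
    (heig : (fAdj G f).mulVec x = specRad (fAdj G f) • x)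
    (v v₂ v₃ : V) (hdeg : G.degree v = 2)
    (h2 : G.Adj v v₂) (h3 : G.Adj v v₃) (hne : v₂ ≠ v₃)
    (h23 : G.Adj v₂ v₃) :
    x v ≤ x v₂ ∧ x v ≤ x v₃ := by
  exact ⟨aux_stmt_8 G f hpos hsymm hmono x hxpos heig v v₂ v₃ hdeg h2 h3 hne h23,
         aux_stmt_8 G f hpos hsymm hmono x hxpos heig v v₃ v₂ hdeg h3 h2 hne.symm h23.symm⟩
end

section
/- Assume f(x,y) > 0 is a symmetric real function increasing in each variable. Let G be a connected graph, v a vertex with deg(v) ≥ 2, and u₁, u₂ two neighbors of v with deg(u_i) ≥ 2. Let x be the Perron eigenvector of A_f(G) and define y_i = f(d_i, 2)·x_i for each vertex i. If y_v ≤ y_{u₁} and y_v ≤ y_{u₂}, then ρ_f(G_{vu₁}) ≤ ρ_f(G), where G_{vu₁} is obtained by subdividing the edge vu₁. -/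
open scoped Classical

set_option linter.unusedSectionVars false
set_option maxHeartbeats 1000000

/-- Subdividing the edge `uv`: a new vertex `Sum.inr ()` is joined to `u` and `v`,
and the edge `uv` is removed. -/
def subdivide {V : Type*} (G : SimpleGraph V) (u v : V) : SimpleGraph (V ⊕ Unit) :=
  SimpleGraph.fromRel (fun a b =>
    match a, b with
    | Sum.inl a, Sum.inl b => G.Adj a b ∧ ¬(a = u ∧ b = v) ∧ ¬(a = v ∧ b = u)
    | Sum.inl a, Sum.inr _ => a = u ∨ a = v
    | _, _ => False)

theorem specRad_le_of_subinvariant {n : Type*} [Fintype n] [DecidableEq n] [Nonempty n]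
    (B : Matrix n n ℝ) (hB : ∀ i j, 0 ≤ B i j) (y : n → ℝ) (hy : ∀ i, 0 < y i)
    (ρ : ℝ) (h : ∀ i, B.mulVec y i ≤ ρ * y i) : specRad B ≤ ρ := by
  have hρ0 : 0 ≤ ρ := by
    obtain ⟨i⟩ := ‹Nonempty n›
    have h0 : 0 ≤ B.mulVec y i := Finset.sum_nonneg fun j _ =>
      mul_nonneg (hB i j) (hy j).le
    nlinarith [h i, hy i]
  apply Real.sSup_le _ hρ0
  rintro r ⟨μ, hroot, rfl⟩
  set Bc : Matrix n n ℂ := B.map (Complex.ofReal ·) with hBc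
  have hdet : (Matrix.diagonal (fun _ => μ) - Bc).det = 0 := by
    have h2 : ((Matrix.charmatrix Bc).map (Polynomial.evalRingHom μ))
        = Matrix.diagonal (fun _ => μ) - Bc := by
      ext i j
      by_cases h : i = j <;> simp [h, Matrix.charmatrix_apply, Matrix.diagonal, Matrix.map_apply]
    have h3 := hroot
    rw [Polynomial.IsRoot, Matrix.charpoly, ← Polynomial.coe_evalRingHom,
      RingHom.map_det] at h3
    rw [← h2]
    exact h3
  obtain ⟨z, hz0, hz⟩ := (Matrix.exists_mulVec_eq_zero_iff).mpr hdet
  have hez : ∀ i, Bc.mulVec z i = μ * z i := by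
    intro i
    have h4 : ((Matrix.diagonal fun _ => μ) - Bc).mulVec z i = 0 := congrFun hz i
    rw [Matrix.sub_mulVec] at h4
    have h5 : (Matrix.diagonal fun _ => μ).mulVec z i = μ * z i := by
      rw [Matrix.mulVec_diagonal]
    have h6 : (Matrix.diagonal fun _ => μ).mulVec z i - Bc.mulVec z i = 0 := h4
    rw [h5] at h6
    linear_combination -h6
  obtain ⟨i₀, -, hmax⟩ := Finset.exists_max_image Finset.univ
    (fun i => ‖z i‖ / y i) ⟨Classical.arbitrary n, Finset.mem_univ _⟩
  set c := ‖z i₀‖ / y i₀ with hc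
  have hbound : ∀ j, ‖z j‖ ≤ c * y j := by
    intro j
    have := hmax j (Finset.mem_univ j)
    rw [div_le_div_iff₀ (hy j) (hy i₀)] at this
    rw [hc, div_mul_eq_mul_div, le_div_iff₀ (hy i₀)]
    linarith
  have hcpos : 0 < c := by
    obtain ⟨j, hj⟩ := Function.ne_iff.mp hz0
    have : 0 < ‖z j‖ := by
      simpa using (norm_pos_iff.mpr hj)
    have := hbound j
    nlinarith [hy j]
  have hzi0 : ‖z i₀‖ = c * y i₀ := by
    rw [hc, div_mul_cancel₀ _ (hy i₀).ne']
  have key : ‖μ‖ * ‖z i₀‖ ≤ ρ * ‖z i₀‖ := by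
    have h7 : ‖μ‖ * ‖z i₀‖ = ‖Bc.mulVec z i₀‖ := by
      rw [hez i₀, norm_mul]
    rw [h7]
    have h8 : ‖Bc.mulVec z i₀‖ ≤ ∑ j, B i₀ j * ‖z j‖ := by
      refine le_trans (norm_sum_le _ _) ?_
      apply le_of_eq
      refine Finset.sum_congr rfl fun j _ => ?_
      rw [hBc]
      simp [Matrix.map_apply, map_mul, Complex.norm_real, abs_of_nonneg (hB i₀ j)]
    have h9 : ∑ j, B i₀ j * ‖z j‖ ≤ ∑ j, B i₀ j * (c * y j) :=
      Finset.sum_le_sum fun j _ => mul_le_mul_of_nonneg_left (hbound j) (hB i₀ j)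
    have h10 : ∑ j, B i₀ j * (c * y j) = c * B.mulVec y i₀ := by
      rw [Matrix.mulVec, dotProduct, Finset.mul_sum]
      refine Finset.sum_congr rfl fun j _ => by ring
    have h11 : c * B.mulVec y i₀ ≤ c * (ρ * y i₀) :=
      mul_le_mul_of_nonneg_left (h i₀) hcpos.le
    calc ‖Bc.mulVec z i₀‖ ≤ ∑ j, B i₀ j * ‖z j‖ := h8
      _ ≤ ∑ j, B i₀ j * (c * y j) := h9
      _ = c * B.mulVec y i₀ := h10
      _ ≤ c * (ρ * y i₀) := h11
      _ = ρ * ‖z i₀‖ := by rw [hzi0]; ring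
  have hpos0 : 0 < ‖z i₀‖ := by rw [hzi0]; exact mul_pos hcpos (hy i₀)
  exact le_of_mul_le_mul_right (by linarith [key]) hpos0

section GraphLemmas
variable {V : Type*} [Fintype V] [DecidableEq V] (G : SimpleGraph V) (u v : V)

lemma subdivide_adj_inl_inl (a b : V) : (subdivide G u v).Adj (Sum.inl a) (Sum.inl b) ↔
    G.Adj a b ∧ ¬(a = u ∧ b = v) ∧ ¬(a = v ∧ b = u) := by
  rw [subdivide, SimpleGraph.fromRel_adj]
  constructor
  · rintro ⟨hne, h | h⟩
    · exact h
    · exact ⟨h.1.symm, fun ⟨ha, hb⟩ => h.2.2 ⟨hb, ha⟩, fun ⟨ha, hb⟩ => h.2.1 ⟨hb, ha⟩⟩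
  · intro h
    exact ⟨fun hh => h.1.ne (Sum.inl.inj hh), Or.inl h⟩

lemma subdivide_adj_inl_inr (a : V) (t : Unit) :
    (subdivide G u v).Adj (Sum.inl a) (Sum.inr t) ↔ a = u ∨ a = v := by
  rw [subdivide, SimpleGraph.fromRel_adj]
  constructor
  · rintro ⟨-, h | h⟩
    · exact h
    · exact h.elim
  · intro h
    exact ⟨Sum.inl_ne_inr, Or.inl h⟩

lemma subdivide_adj_inr_inr (t s : Unit) : ¬ (subdivide G u v).Adj (Sum.inr t) (Sum.inr s) := by
  rw [subdivide, SimpleGraph.fromRel_adj]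
  rintro ⟨hne, h | h⟩ <;> exact h

lemma subdivide_degree_inr (h : G.Adj u v) (t : Unit) :
    (subdivide G u v).degree (Sum.inr t) = 2 := by
  rw [SimpleGraph.degree]
  have : (subdivide G u v).neighborFinset (Sum.inr t) = {Sum.inl u, Sum.inl v} := by
    ext s
    rw [SimpleGraph.mem_neighborFinset]
    rcases s with a | s
    · rw [(subdivide G u v).adj_comm, subdivide_adj_inl_inr]
      simp
    · cases t; cases s
      simp [subdivide_adj_inr_inr G u v () ()]
  rw [this]
  rw [Finset.card_insert_of_notMem (by simp [h.ne]), Finset.card_singleton]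

private def swEmb (w : V) : V ↪ (V ⊕ Unit) :=
  ⟨fun b => if b = w then Sum.inr () else Sum.inl b, by
    intro b b' hb
    by_cases h1 : b = w <;> by_cases h2 : b' = w
    · exact h1.trans h2.symm
    · simp [h1, h2] at hb
    · simp [h1, h2] at hb
    · simpa [h1, h2] using hb⟩

lemma subdivide_degree_inl (h : G.Adj u v) (a : V) :
    (subdivide G u v).degree (Sum.inl a) = G.degree a := by
  by_cases hau : a = u
  · subst hau
    rw [SimpleGraph.degree, SimpleGraph.degree,
      show (subdivide G a v).neighborFinset (Sum.inl a)
        = (G.neighborFinset a).map (swEmb v) from ?_, Finset.card_map]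
    ext s
    rw [SimpleGraph.mem_neighborFinset, Finset.mem_map]
    rcases s with b | t
    · rw [subdivide_adj_inl_inl]
      constructor
      · rintro ⟨hb, h1, -⟩
        have hbv : b ≠ v := fun hbv => h1 ⟨rfl, hbv⟩
        exact ⟨b, by rwa [SimpleGraph.mem_neighborFinset], if_neg hbv⟩
      · rintro ⟨c, hc, hcb⟩
        rw [SimpleGraph.mem_neighborFinset] at hc
        by_cases hcv : c = v <;> simp [swEmb, hcv, DFunLike.coe] at hcb
        subst hcb
        exact ⟨hc, fun hh => hcv hh.2, fun hh => hcv (hh.2.trans hh.1)⟩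
    · rw [subdivide_adj_inl_inr]
      constructor
      · intro _
        exact ⟨v, by rwa [SimpleGraph.mem_neighborFinset], by cases t; exact if_pos rfl⟩
      · intro _
        exact Or.inl rfl
  · by_cases hav : a = v
    · subst hav
      rw [SimpleGraph.degree, SimpleGraph.degree,
        show (subdivide G u a).neighborFinset (Sum.inl a)
          = (G.neighborFinset a).map (swEmb u) from ?_, Finset.card_map]
      ext s
      rw [SimpleGraph.mem_neighborFinset, Finset.mem_map]
      rcases s with b | t
      · rw [subdivide_adj_inl_inl]
        constructor
        · rintro ⟨hb, -, h2⟩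
          have hbu : b ≠ u := fun hbu => h2 ⟨rfl, hbu⟩
          exact ⟨b, by rwa [SimpleGraph.mem_neighborFinset], if_neg hbu⟩
        · rintro ⟨c, hc, hcb⟩
          rw [SimpleGraph.mem_neighborFinset] at hc
          by_cases hcu : c = u <;> simp [swEmb, hcu, DFunLike.coe] at hcb
          subst hcb
          exact ⟨hc, fun hh => hcu (hh.2.trans hh.1), fun hh => hcu hh.2⟩
      · rw [subdivide_adj_inl_inr]
        constructor
        · intro _
          exact ⟨u, by rw [SimpleGraph.mem_neighborFinset]; exact h.symm, by cases t; exact if_pos rfl⟩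
        · intro _
          exact Or.inr rfl
    · rw [SimpleGraph.degree, SimpleGraph.degree,
        show (subdivide G u v).neighborFinset (Sum.inl a)
          = (G.neighborFinset a).map ⟨Sum.inl, Sum.inl_injective⟩ from ?_, Finset.card_map]
      ext s
      rw [SimpleGraph.mem_neighborFinset, Finset.mem_map]
      rcases s with b | t
      · rw [subdivide_adj_inl_inl]
        constructor
        · rintro ⟨hb, -, -⟩
          exact ⟨b, by rwa [SimpleGraph.mem_neighborFinset], rfl⟩
        · rintro ⟨c, hc, hcb⟩
          rw [SimpleGraph.mem_neighborFinset] at hc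
          cases hcb
          exact ⟨hc, fun hh => hau hh.1, fun hh => hav hh.1⟩
      · rw [subdivide_adj_inl_inr]
        constructor
        · rintro (rfl | rfl)
          · exact absurd rfl hau
          · exact absurd rfl hav
        · rintro ⟨c, hc, hcb⟩
          exact absurd hcb (by simp)

lemma degree_pos_of_adj {a b : V} (h : G.Adj a b) : 0 < G.degree a :=
  Finset.card_pos.mpr ⟨b, (SimpleGraph.mem_neighborFinset G a b).mpr h⟩

lemma fAdj_nonneg (f : ℝ → ℝ → ℝ) (hpos : ∀ x y : ℝ, 0 < x → 0 < y → 0 < f x y)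
    (i j : V) : 0 ≤ fAdj G f i j := by
  rw [fAdj]
  split
  · next h =>
    have hi : (0:ℝ) < G.degree i := by exact_mod_cast degree_pos_of_adj G h
    have hj : (0:ℝ) < G.degree j := by exact_mod_cast degree_pos_of_adj G h.symm
    exact (hpos _ _ hi hj).le
  · exact le_refl _

lemma sum_ite_single (c : ℝ) (w : V) (x : V → ℝ) :
    ∑ b : V, (if b = w then c else 0) * x b = c * x w := by
  rw [Finset.sum_congr rfl (fun b _ => by rw [ite_mul, zero_mul]),
    Finset.sum_ite_eq' Finset.univ w (fun b => c * x b), if_pos (Finset.mem_univ w)]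

end GraphLemmas

theorem stmt_9 {V : Type*} [Fintype V] [DecidableEq V]
    (G : SimpleGraph V) (hconn : G.Connected)
    (f : ℝ → ℝ → ℝ)
    (hpos : ∀ x y : ℝ, 0 < x → 0 < y → 0 < f x y)
    (hsymm : ∀ x y : ℝ, f x y = f y x)
    (hmono : ∀ y : ℝ, Monotone fun x => f x y)
    (v u₁ u₂ : V) (hdv : 2 ≤ G.degree v)
    (h1 : G.Adj v u₁) (h2 : G.Adj v u₂) (hu : u₁ ≠ u₂)
    (hd1 : 2 ≤ G.degree u₁) (hd2 : 2 ≤ G.degree u₂)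
    (x : V → ℝ) (hxpos : ∀ i, 0 < x i)
    (heig : (fAdj G f).mulVec x = specRad (fAdj G f) • x)
    (hy1 : f (G.degree v) 2 * x v ≤ f (G.degree u₁) 2 * x u₁)
    (hy2 : f (G.degree v) 2 * x v ≤ f (G.degree u₂) 2 * x u₂) :
    specRad (fAdj (subdivide G v u₁) f) ≤ specRad (fAdj G f) := by
  set ρ := specRad (fAdj G f) with hρ
  set G' := subdivide G v u₁ with hG'
  set A := fAdj G f with hA
  set A' := fAdj G' f with hA'
  have hvu : v ≠ u₁ := h1.ne
  have hdvR : (2:ℝ) ≤ (G.degree v : ℝ) := by exact_mod_cast hdv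
  have hd1R : (2:ℝ) ≤ (G.degree u₁ : ℝ) := by exact_mod_cast hd1
  have hd2R : (2:ℝ) ≤ (G.degree u₂ : ℝ) := by exact_mod_cast hd2
  have hAx : ∀ i, A.mulVec x i = ρ * x i := fun i => by
    rw [hA, heig]; simp [Pi.smul_apply, smul_eq_mul]
  have hAnn : ∀ i j, 0 ≤ A i j := fun i j => fAdj_nonneg G f hpos i j
  have hA'nn : ∀ i j, 0 ≤ A' i j := fun i j => fAdj_nonneg G' f hpos i j
  have hAv1 : A v u₁ = f (G.degree v) (G.degree u₁) := by rw [hA, fAdj, if_pos h1]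
  have hAv2 : A v u₂ = f (G.degree v) (G.degree u₂) := by rw [hA, fAdj, if_pos h2]
  have hA1v : A u₁ v = f (G.degree u₁) (G.degree v) := by rw [hA, fAdj, if_pos h1.symm]
  have hE1 : ∀ a b, a ≠ v → a ≠ u₁ → A' (Sum.inl a) (Sum.inl b) = A a b := by
    intro a b hav hau
    have hadj : G'.Adj (Sum.inl a) (Sum.inl b) ↔ G.Adj a b := by
      rw [hG', subdivide_adj_inl_inl]
      exact ⟨fun h => h.1, fun h => ⟨h, fun hh => hav hh.1, fun hh => hau hh.1⟩⟩
    rw [hA', hA]; unfold fAdj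
    rw [hG'] at hadj ⊢
    simp only [subdivide_degree_inl G v u₁ h1]
    rw [if_congr hadj rfl rfl]
  have hE2 : ∀ a, a ≠ v → a ≠ u₁ → A' (Sum.inl a) (Sum.inr ()) = 0 := by
    intro a hav hau
    rw [hA']; unfold fAdj
    rw [if_neg]
    rw [hG', subdivide_adj_inl_inr]
    rintro (rfl | rfl)
    · exact hav rfl
    · exact hau rfl
  have hE3 : ∀ b, A' (Sum.inl v) (Sum.inl b) = if b = u₁ then 0 else A v b := by
    intro b
    by_cases hb : b = u₁
    · subst hb
      rw [if_pos rfl, hA']; unfold fAdj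
      rw [if_neg]
      rw [hG', subdivide_adj_inl_inl]
      rintro ⟨-, hc, -⟩
      exact hc ⟨rfl, rfl⟩
    · rw [if_neg hb]
      have hadj : G'.Adj (Sum.inl v) (Sum.inl b) ↔ G.Adj v b := by
        rw [hG', subdivide_adj_inl_inl]
        exact ⟨fun h => h.1, fun h => ⟨h, fun hh => hb hh.2, fun hh => hvu hh.1⟩⟩
      rw [hA', hA]; unfold fAdj
      rw [hG'] at hadj ⊢
      simp only [subdivide_degree_inl G v u₁ h1]
      rw [if_congr hadj rfl rfl]
  have hE4 : A' (Sum.inl v) (Sum.inr ()) = f (G.degree v) 2 := by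
    rw [hA']; unfold fAdj
    rw [if_pos]
    · rw [hG']
      simp only [subdivide_degree_inl G v u₁ h1, subdivide_degree_inr G v u₁ h1]
      norm_num
    · rw [hG', subdivide_adj_inl_inr]
      exact Or.inl rfl
  have hE5 : ∀ b, A' (Sum.inl u₁) (Sum.inl b) = if b = v then 0 else A u₁ b := by
    intro b
    by_cases hb : b = v
    · subst hb
      rw [if_pos rfl, hA']; unfold fAdj
      rw [if_neg]
      rw [hG', subdivide_adj_inl_inl]
      rintro ⟨-, -, hc⟩
      exact hc ⟨rfl, rfl⟩
    · rw [if_neg hb]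
      have hadj : G'.Adj (Sum.inl u₁) (Sum.inl b) ↔ G.Adj u₁ b := by
        rw [hG', subdivide_adj_inl_inl]
        exact ⟨fun h => h.1, fun h => ⟨h, fun hh => hvu hh.1.symm, fun hh => hb hh.2⟩⟩
      rw [hA', hA]; unfold fAdj
      rw [hG'] at hadj ⊢
      simp only [subdivide_degree_inl G v u₁ h1]
      rw [if_congr hadj rfl rfl]
  have hE6 : A' (Sum.inl u₁) (Sum.inr ()) = f (G.degree u₁) 2 := by
    rw [hA']; unfold fAdj
    rw [if_pos]
    · rw [hG']
      simp only [subdivide_degree_inl G v u₁ h1, subdivide_degree_inr G v u₁ h1]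
      norm_num
    · rw [hG', subdivide_adj_inl_inr]
      exact Or.inr rfl
  have hE7 : ∀ b, A' (Sum.inr ()) (Sum.inl b) =
      (if b = v then f 2 (G.degree v) else 0) + (if b = u₁ then f 2 (G.degree u₁) else 0) := by
    intro b
    have hadj : G'.Adj (Sum.inr ()) (Sum.inl b) ↔ b = v ∨ b = u₁ := by
      rw [G'.adj_comm, hG', subdivide_adj_inl_inr]
    by_cases hbv : b = v
    · rw [if_pos hbv, if_neg (fun h => hvu (hbv.symm.trans h)), add_zero, hA']; unfold fAdj
      rw [if_pos (hadj.mpr (Or.inl hbv)), hbv, hG']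
      simp only [subdivide_degree_inl G v u₁ h1, subdivide_degree_inr G v u₁ h1]
      norm_num
    · by_cases hbu : b = u₁
      · rw [if_neg hbv, if_pos hbu, zero_add, hA']; unfold fAdj
        rw [if_pos (hadj.mpr (Or.inr hbu)), hbu, hG']
        simp only [subdivide_degree_inl G v u₁ h1, subdivide_degree_inr G v u₁ h1]
        norm_num
      · rw [if_neg hbv, if_neg hbu, add_zero, hA']; unfold fAdj
        rw [if_neg]
        rw [hG'] at hadj
        rw [hG', hadj]
        rintro (rfl | rfl)
        · exact hbv rfl
        · exact hbu rfl
  have hE8 : A' (Sum.inr ()) (Sum.inr ()) = 0 := by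
    rw [hA']; unfold fAdj
    rw [if_neg]
    rw [hG']
    exact subdivide_adj_inr_inr G v u₁ () ()
  set y : (V ⊕ Unit) → ℝ := Sum.elim x (fun _ => x v) with hy
  have hypos : ∀ i, 0 < y i := by rintro (a | t) <;> simp [hy, hxpos]
  have hmv : ∀ i, A'.mulVec y i = (∑ b : V, A' i (Sum.inl b) * x b) + A' i (Sum.inr ()) * x v := by
    intro i
    rw [Matrix.mulVec, dotProduct, Fintype.sum_sum_type]
    simp [hy]
  have hmvA : ∀ a, A.mulVec x a = ∑ b : V, A a b * x b := by
    intro a; rw [Matrix.mulVec, dotProduct]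
  have hf1 : f 2 (G.degree u₁) ≤ f (G.degree v) (G.degree u₁) := hmono _ hdvR
  have hf2 : f 2 (G.degree u₂) ≤ f (G.degree v) (G.degree u₂) := hmono _ hdvR
  have hrow : ∀ i, A'.mulVec y i ≤ ρ * y i := by
    rintro (a | t)
    · rw [hmv]
      have hyl : y (Sum.inl a) = x a := rfl
      rw [hyl]
      by_cases hav : a = v
      · rw [hav]
        have hpt : ∀ b, A' (Sum.inl v) (Sum.inl b) * x b
            = A v b * x b - (if b = u₁ then A v u₁ * x u₁ else 0) := by
          intro b
          rw [hE3 b]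
          by_cases hb : b = u₁
          · subst hb; simp
          · simp [hb]
        have hs : ∑ b : V, A' (Sum.inl v) (Sum.inl b) * x b
            = (∑ b : V, A v b * x b) - A v u₁ * x u₁ := by
          rw [Finset.sum_congr rfl (fun b _ => hpt b), Finset.sum_sub_distrib,
            Finset.sum_ite_eq' Finset.univ u₁ (fun _ => A v u₁ * x u₁),
            if_pos (Finset.mem_univ u₁)]
        rw [hs, hE4]
        have hsum : ∑ b : V, A v b * x b = ρ * x v := (hmvA v).symm.trans (hAx v)
        have hkey : f (G.degree v) 2 * x v ≤ A v u₁ * x u₁ := by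
          rw [hAv1]
          calc f (G.degree v) 2 * x v ≤ f (G.degree u₁) 2 * x u₁ := hy1
            _ = f 2 (G.degree u₁) * x u₁ := by rw [hsymm]
            _ ≤ f (G.degree v) (G.degree u₁) * x u₁ :=
                mul_le_mul_of_nonneg_right hf1 (hxpos u₁).le
        linarith
      · by_cases hau : a = u₁
        · rw [hau]
          have hpt : ∀ b, A' (Sum.inl u₁) (Sum.inl b) * x b
              = A u₁ b * x b - (if b = v then A u₁ v * x v else 0) := by
            intro b
            rw [hE5 b]
            by_cases hb : b = v
            · subst hb; simp
            · simp [hb]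
          have hs : ∑ b : V, A' (Sum.inl u₁) (Sum.inl b) * x b
              = (∑ b : V, A u₁ b * x b) - A u₁ v * x v := by
            rw [Finset.sum_congr rfl (fun b _ => hpt b), Finset.sum_sub_distrib,
              Finset.sum_ite_eq' Finset.univ v (fun _ => A u₁ v * x v),
              if_pos (Finset.mem_univ v)]
          rw [hs, hE6]
          have hsum : ∑ b : V, A u₁ b * x b = ρ * x u₁ := (hmvA u₁).symm.trans (hAx u₁)
          have hkey : f (G.degree u₁) 2 * x v ≤ A u₁ v * x v := by
            rw [hA1v]
            have : f (G.degree u₁) 2 ≤ f (G.degree u₁) (G.degree v) := by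
              rw [hsymm (G.degree u₁) 2, hsymm (G.degree u₁) (G.degree v)]
              exact hf1
            exact mul_le_mul_of_nonneg_right this (hxpos v).le
          linarith
        · rw [Finset.sum_congr rfl (fun b _ => by rw [hE1 a b hav hau]), hE2 a hav hau,
            zero_mul, add_zero]
          have hsum : ∑ b : V, A a b * x b = ρ * x a := (hmvA a).symm.trans (hAx a)
          linarith
    · cases t
      rw [hmv]
      have hyr : y (Sum.inr ()) = x v := rfl
      rw [hyr, hE8, zero_mul, add_zero]
      have hs : ∑ b : V, A' (Sum.inr ()) (Sum.inl b) * x b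
          = f 2 (G.degree v) * x v + f 2 (G.degree u₁) * x u₁ := by
        rw [Finset.sum_congr rfl (fun b _ => by rw [hE7 b, add_mul]),
          Finset.sum_add_distrib, sum_ite_single, sum_ite_single]
      rw [hs]
      have hsub : A v u₁ * x u₁ + A v u₂ * x u₂ ≤ ∑ b : V, A v b * x b := by
        have hsub0 := Finset.sum_le_sum_of_subset_of_nonneg
          (Finset.subset_univ ({u₁, u₂} : Finset V))
          (fun i _ _ => mul_nonneg (hAnn v i) (hxpos i).le)
        rwa [Finset.sum_pair hu] at hsub0
      have hsum : ∑ b : V, A v b * x b = ρ * x v := (hmvA v).symm.trans (hAx v)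
      have k1 : f 2 (G.degree u₁) * x u₁ ≤ A v u₁ * x u₁ := by
        rw [hAv1]; exact mul_le_mul_of_nonneg_right hf1 (hxpos u₁).le
      have k2 : f 2 (G.degree v) * x v ≤ A v u₂ * x u₂ := by
        rw [hAv2]
        calc f 2 (G.degree v) * x v = f (G.degree v) 2 * x v := by rw [hsymm]
          _ ≤ f (G.degree u₂) 2 * x u₂ := hy2
          _ = f 2 (G.degree u₂) * x u₂ := by rw [hsymm]
          _ ≤ f (G.degree v) (G.degree u₂) * x u₂ :=
              mul_le_mul_of_nonneg_right hf2 (hxpos u₂).le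
      linarith
  haveI : Nonempty (V ⊕ Unit) := ⟨Sum.inr ()⟩
  exact specRad_le_of_subinvariant A' hA'nn y hypos ρ hrow
end

section
/- Assume f(x,y) > 0 is symmetric, increasing in each variable and convex in each variable. Let G be a connected graph and u, v nonadjacent vertices. Let G' be obtained from G by replacing each edge uw with vw for every vertex w adjacent to u but not to v (the Kelmans operation). If G' is connected and G' ≇ G, then ρ_f(G) < ρ_f(G'). -/
open scoped Classical

/-- The Kelmans operation from `u` to `v`: every edge `uw` with `w` adjacent to `u` but
not to `v` (and `w ≠ v`) is replaced by the edge `vw`. -/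
def kelmans {V : Type*} (G : SimpleGraph V) (u v : V) : SimpleGraph V :=
  SimpleGraph.fromRel (fun a b =>
    (G.Adj a b ∧ ¬(a = u ∧ ¬G.Adj v b ∧ b ≠ v) ∧ ¬(b = u ∧ ¬G.Adj v a ∧ a ≠ v)) ∨
    (a = v ∧ G.Adj u b ∧ ¬G.Adj v b ∧ b ≠ v))


open Polynomial Matrix RealInnerProductSpace

section SpecAux
set_option linter.unusedSectionVars false
variable {n : Type*} [Fintype n] [DecidableEq n] {A : Matrix n n ℝ}

noncomputable def lamMax (hA : A.IsHermitian) : ℝ := ⨆ i, hA.eigenvalues i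

theorem charpoly_unitary_conj (U M : Matrix n n ℝ) (hU : U * star U = 1) :
    (U * M * star U).charpoly = M.charpoly := by
  unfold Matrix.charpoly
  have h2 : (U.map C) * ((star U).map C) = 1 := by
    rw [← Matrix.map_mul, hU]; simp
  have key : charmatrix (U * M * star U) =
      (U.map C) * charmatrix M * ((star U).map C) := by
    unfold charmatrix
    simp only [RingHom.mapMatrix_apply]
    have h1 : ((U * M * star U).map C) = (U.map C) * (M.map C) * ((star U).map C) := by
      simp [Matrix.map_mul]
    rw [h1, Matrix.mul_sub, Matrix.sub_mul]
    congr 1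
    have hc : ∀ B : Matrix n n ℝ[X], (Matrix.scalar n (X : ℝ[X])) * B = B * (Matrix.scalar n (X : ℝ[X])) := fun B => (Matrix.scalar_commute (X : ℝ[X]) (Commute.all X) B)
    rw [Matrix.mul_assoc, hc, ← Matrix.mul_assoc, h2, Matrix.one_mul]
  rw [key, Matrix.det_mul, Matrix.det_mul]
  have hd : (U.map C).det * ((star U).map C).det = 1 := by
    rw [← Matrix.det_mul, h2, Matrix.det_one]
  calc (U.map C).det * (charmatrix M).det * ((star U).map C).det
      = (charmatrix M).det * ((U.map C).det * ((star U).map C).det) := by ring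
    _ = (charmatrix M).det := by rw [hd, mul_one]


theorem charpoly_eq_prod (hA : A.IsHermitian) :
    A.charpoly = ∏ i, (X - C (hA.eigenvalues i)) := by
  have hU : (hA.eigenvectorUnitary : Matrix n n ℝ) * star (hA.eigenvectorUnitary : Matrix n n ℝ) = 1 :=
    Matrix.mem_unitaryGroup_iff.mp hA.eigenvectorUnitary.2
  have hd : Matrix.diagonal (RCLike.ofReal ∘ hA.eigenvalues) = Matrix.diagonal hA.eigenvalues := by
    simp [RCLike.ofReal]
  conv_lhs => rw [hA.spectral_theorem, hd, Unitary.conjStarAlgAut_apply, charpoly_unitary_conj _ _ hU]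
  rw [Matrix.charpoly]
  have : charmatrix (Matrix.diagonal hA.eigenvalues)
      = Matrix.diagonal (fun i => (X : ℝ[X]) - C (hA.eigenvalues i)) := by
    ext i j
    by_cases h : i = j
    · subst h; simp [charmatrix_apply_eq]
    · simp [charmatrix_apply_ne _ _ _ h, Matrix.diagonal_apply_ne _ h]
  rw [this, Matrix.det_diagonal]


theorem specRad_eq_iSup_abs [Nonempty n] (hA : A.IsHermitian) :
    specRad A = ⨆ i, |hA.eigenvalues i| := by
  have hcp : (A.map (Complex.ofReal ·)).charpoly = ∏ i, (X - C ((hA.eigenvalues i : ℂ))) := by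
    have : A.map (Complex.ofReal ·) = A.map Complex.ofRealHom := rfl
    rw [this, Matrix.charpoly_map, charpoly_eq_prod hA, Polynomial.map_prod]
    simp
  have hS : {r : ℝ | ∃ μ : ℂ, (A.map (Complex.ofReal ·)).charpoly.IsRoot μ ∧ r = ‖μ‖}
      = Set.range (fun i => |hA.eigenvalues i|) := by
    ext r
    simp only [Set.mem_setOf_eq, Set.mem_range, hcp, Polynomial.IsRoot, Polynomial.eval_prod,
      Finset.prod_eq_zero_iff, Polynomial.eval_sub, Polynomial.eval_X, Polynomial.eval_C,
      Finset.mem_univ, true_and, sub_eq_zero]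
    constructor
    · rintro ⟨μ, ⟨i, hi⟩, rfl⟩
      exact ⟨i, by rw [hi, Complex.norm_real, Real.norm_eq_abs]⟩
    · rintro ⟨i, rfl⟩
      exact ⟨(hA.eigenvalues i : ℂ), ⟨i, rfl⟩, by rw [Complex.norm_real, Real.norm_eq_abs]⟩
  rw [specRad, hS]
  rfl


theorem quad_decomp (hA : A.IsHermitian) (x : n → ℝ) :
    x ⬝ᵥ (A *ᵥ x) = ∑ i, hA.eigenvalues i * ((star (hA.eigenvectorUnitary : Matrix n n ℝ) *ᵥ x) i)^2 ∧
    x ⬝ᵥ x = ∑ i, ((star (hA.eigenvectorUnitary : Matrix n n ℝ) *ᵥ x) i)^2 := by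
  set U : Matrix n n ℝ := (hA.eigenvectorUnitary : Matrix n n ℝ) with hUdef
  have hU : U * star U = 1 := Matrix.mem_unitaryGroup_iff.mp hA.eigenvectorUnitary.2
  set c : n → ℝ := star U *ᵥ x with hc
  have hstar : star U = Uᵀ := rfl
  have hdot : ∀ w : n → ℝ, x ⬝ᵥ (U *ᵥ w) = c ⬝ᵥ w := by
    intro w
    rw [dotProduct_mulVec, hc, hstar, Matrix.mulVec_transpose]
  constructor
  · have hd : Matrix.diagonal (RCLike.ofReal ∘ hA.eigenvalues) = Matrix.diagonal hA.eigenvalues := by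
      simp [RCLike.ofReal]
    conv_lhs => rw [hA.spectral_theorem, hd, Unitary.conjStarAlgAut_apply]
    rw [← Matrix.mulVec_mulVec, ← Matrix.mulVec_mulVec, hdot]
    unfold dotProduct
    congr 1; ext i
    rw [Matrix.mulVec_diagonal]
    ring
  · conv_lhs => rw [show x ⬝ᵥ x = x ⬝ᵥ ((1 : Matrix n n ℝ) *ᵥ x) by rw [Matrix.one_mulVec],
      ← hU, ← Matrix.mulVec_mulVec, hdot]
    unfold dotProduct
    congr 1; ext i
    ring


theorem eig_le_lamMax (hA : A.IsHermitian) (i : n) : hA.eigenvalues i ≤ lamMax hA :=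
  le_ciSup (Set.Finite.bddAbove (Set.finite_range _)) i


theorem rayleigh_le [Nonempty n] (hA : A.IsHermitian) (x : n → ℝ) :
    x ⬝ᵥ (A *ᵥ x) ≤ lamMax hA * (x ⬝ᵥ x) := by
  obtain ⟨h1, h2⟩ := quad_decomp hA x
  rw [h1, h2, Finset.mul_sum]
  exact Finset.sum_le_sum fun i _ =>
    mul_le_mul_of_nonneg_right (eig_le_lamMax hA i) (sq_nonneg _)


theorem rayleigh_eq_eigenvec [Nonempty n] (hA : A.IsHermitian) (x : n → ℝ)
    (h : x ⬝ᵥ (A *ᵥ x) = lamMax hA * (x ⬝ᵥ x)) : A *ᵥ x = lamMax hA • x := by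
  obtain ⟨h1, h2⟩ := quad_decomp hA x
  set U : Matrix n n ℝ := (hA.eigenvectorUnitary : Matrix n n ℝ) with hUdef
  have hU : U * star U = 1 := Matrix.mem_unitaryGroup_iff.mp hA.eigenvectorUnitary.2
  set c : n → ℝ := star U *ᵥ x with hc
  have hzero : ∀ i, (lamMax hA - hA.eigenvalues i) * (c i)^2 = 0 := by
    have hsum : ∑ i, (lamMax hA - hA.eigenvalues i) * (c i)^2 = 0 := by
      have hs : ∑ i, (lamMax hA - hA.eigenvalues i) * (c i)^2
          = lamMax hA * (x ⬝ᵥ x) - x ⬝ᵥ (A *ᵥ x) := by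
        rw [h1, h2, Finset.mul_sum, ← Finset.sum_sub_distrib]
        exact Finset.sum_congr rfl fun i _ => by ring
      rw [hs, h, sub_self]
    have hnn : ∀ i ∈ Finset.univ, 0 ≤ (lamMax hA - hA.eigenvalues i) * (c i)^2 := fun i _ =>
      mul_nonneg (sub_nonneg.mpr (eig_le_lamMax hA i)) (sq_nonneg _)
    intro i
    exact (Finset.sum_eq_zero_iff_of_nonneg hnn).mp hsum i (Finset.mem_univ i)
  have hDc : Matrix.diagonal hA.eigenvalues *ᵥ c = lamMax hA • c := by
    ext i
    rw [Matrix.mulVec_diagonal]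
    rcases mul_eq_zero.mp (hzero i) with h' | h'
    · have : hA.eigenvalues i = lamMax hA ∨ c i = 0 := by
        rcases eq_or_ne (c i) 0 with hc0 | hc0
        · exact Or.inr hc0
        · left; linarith [sub_eq_zero.mp h']
      rcases this with h'' | h''
      · rw [h'']; rfl
      · simp [h'']
    · have : c i = 0 := pow_eq_zero_iff (n := 2) (by norm_num) |>.mp h'
      simp [this]
  have hd : Matrix.diagonal (RCLike.ofReal ∘ hA.eigenvalues) = Matrix.diagonal hA.eigenvalues := by
    simp [RCLike.ofReal]
  conv_lhs => rw [hA.spectral_theorem, hd, Unitary.conjStarAlgAut_apply]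
  rw [← Matrix.mulVec_mulVec, ← Matrix.mulVec_mulVec, ← hc, hDc, Matrix.mulVec_smul]
  rw [Matrix.mulVec_mulVec, hU, Matrix.one_mulVec]


theorem exists_lamMax_eigenvec [Nonempty n] (hA : A.IsHermitian) :
    ∃ z : n → ℝ, z ⬝ᵥ z = 1 ∧ A *ᵥ z = lamMax hA • z := by
  obtain ⟨j, hj⟩ := Finite.exists_max hA.eigenvalues
  have hjmax : hA.eigenvalues j = lamMax hA :=
    le_antisymm (eig_le_lamMax hA j) (ciSup_le hj)
  refine ⟨⇑(hA.eigenvectorBasis j), ?_, by rw [hA.mulVec_eigenvectorBasis, hjmax]⟩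
  have hnorm := hA.eigenvectorBasis.orthonormal.1 j
  have hsq : (∑ i, ‖(hA.eigenvectorBasis j) i‖^2) = 1 := by
    have := congrArg (·^2) hnorm
    simp only [EuclideanSpace.norm_eq] at this
    rw [Real.sq_sqrt (by positivity)] at this
    simpa using this
  rw [← hsq]
  unfold dotProduct
  exact Finset.sum_congr rfl fun i _ => by
    rw [Real.norm_eq_abs, sq_abs, sq]


theorem lamMax_nonneg [Nonempty n] (hA : A.IsHermitian) (hnn : ∀ i j, 0 ≤ A i j) :
    0 ≤ lamMax hA := by
  obtain ⟨i⟩ := ‹Nonempty n›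
  have h := rayleigh_le hA (Pi.single i 1)
  have hd : (Pi.single i 1 : n → ℝ) ⬝ᵥ (A *ᵥ Pi.single i 1) = A i i := by
    simp [dotProduct, Matrix.mulVec, Pi.single_apply, Finset.sum_ite_eq',
      dotProduct]
  have hd2 : (Pi.single i 1 : n → ℝ) ⬝ᵥ Pi.single i 1 = 1 := by
    simp [dotProduct, Pi.single_apply]
  rw [hd, hd2, mul_one] at h
  linarith [hnn i i]


theorem abs_dot_le (hnn : ∀ i j, 0 ≤ A i j) (z : n → ℝ) :
    |z ⬝ᵥ (A *ᵥ z)| ≤ (fun i => |z i|) ⬝ᵥ (A *ᵥ fun i => |z i|) := by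
  unfold dotProduct Matrix.mulVec
  calc |∑ i, z i * ∑ j, A i j * z j| ≤ ∑ i, |z i * ∑ j, A i j * z j| := Finset.abs_sum_le_sum_abs _ _
    _ ≤ ∑ i, |z i| * ∑ j, A i j * |z j| := by
        apply Finset.sum_le_sum
        intro i _
        rw [abs_mul]
        apply mul_le_mul_of_nonneg_left _ (abs_nonneg _)
        calc |∑ j, A i j * z j| ≤ ∑ j, |A i j * z j| := Finset.abs_sum_le_sum_abs _ _
          _ = ∑ j, A i j * |z j| := Finset.sum_congr rfl fun j _ => by
              rw [abs_mul, abs_of_nonneg (hnn i j)]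
    _ = _ := rfl


theorem specRad_eq_lamMax [Nonempty n] (hA : A.IsHermitian) (hnn : ∀ i j, 0 ≤ A i j) :
    specRad A = lamMax hA := by
  rw [specRad_eq_iSup_abs hA]
  apply le_antisymm
  · apply ciSup_le
    intro j
    obtain ⟨jj, hjj⟩ : ∃ jj, hA.eigenvalues jj = hA.eigenvalues j := ⟨j, rfl⟩
    -- |eig j| ≤ lamMax: use eigenvector z = basis column j
    set z : n → ℝ := ⇑(hA.eigenvectorBasis j) with hz
    have hev : A *ᵥ z = hA.eigenvalues j • z := hA.mulVec_eigenvectorBasis j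
    have hzz : z ⬝ᵥ z = 1 := by
      have hnorm := hA.eigenvectorBasis.orthonormal.1 j
      have hsq : (∑ i, ‖(hA.eigenvectorBasis j) i‖^2) = 1 := by
        have := congrArg (·^2) hnorm
        simp only [EuclideanSpace.norm_eq] at this
        rw [Real.sq_sqrt (by positivity)] at this
        simpa using this
      rw [← hsq]
      unfold dotProduct
      exact Finset.sum_congr rfl fun i _ => by
        rw [Real.norm_eq_abs, sq_abs, sq]
    have h1 : z ⬝ᵥ (A *ᵥ z) = hA.eigenvalues j := by
      rw [hev, dotProduct_smul, hzz]; simp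
    have h2 : |hA.eigenvalues j| ≤ (fun i => |z i|) ⬝ᵥ (A *ᵥ fun i => |z i|) := by
      rw [← h1]; exact abs_dot_le hnn z
    have h3 : (fun i => |z i|) ⬝ᵥ (A *ᵥ fun i => |z i|) ≤ lamMax hA * ((fun i => |z i|) ⬝ᵥ (fun i => |z i|)) :=
      rayleigh_le hA _
    have h4 : (fun i => |z i|) ⬝ᵥ (fun i => |z i|) = 1 := by
      rw [← hzz]; unfold dotProduct
      exact Finset.sum_congr rfl fun i _ => by rw [← abs_mul, abs_mul_self]
    rw [h4, mul_one] at h3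
    linarith
  · apply ciSup_le
    intro j
    exact le_trans (le_abs_self _) (le_ciSup (f := fun i => |hA.eigenvalues i|) (Set.Finite.bddAbove (Set.finite_range _)) j)


theorem exists_nonneg_eigenvec [Nonempty n] (hA : A.IsHermitian) (hnn : ∀ i j, 0 ≤ A i j) :
    ∃ x : n → ℝ, x ⬝ᵥ x = 1 ∧ (∀ i, 0 ≤ x i) ∧ A *ᵥ x = lamMax hA • x := by
  obtain ⟨z, hzz, hev⟩ := exists_lamMax_eigenvec hA
  refine ⟨fun i => |z i|, ?_, fun i => abs_nonneg _, ?_⟩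
  · rw [← hzz]; unfold dotProduct
    exact Finset.sum_congr rfl fun i _ => by rw [← abs_mul, abs_mul_self]
  · have h4 : (fun i => |z i|) ⬝ᵥ (fun i => |z i|) = 1 := by
      rw [← hzz]; unfold dotProduct
      exact Finset.sum_congr rfl fun i _ => by rw [← abs_mul, abs_mul_self]
    apply rayleigh_eq_eigenvec hA
    rw [h4, mul_one]
    have h1 : z ⬝ᵥ (A *ᵥ z) = lamMax hA := by
      rw [hev, dotProduct_smul, hzz]; simp
    have h2 : lamMax hA ≤ (fun i => |z i|) ⬝ᵥ (A *ᵥ fun i => |z i|) := by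
      calc lamMax hA = |lamMax hA| := (abs_of_nonneg (lamMax_nonneg hA hnn)).symm
        _ = |z ⬝ᵥ (A *ᵥ z)| := by rw [h1]
        _ ≤ _ := abs_dot_le hnn z
    have h3 := rayleigh_le hA (fun i => |z i|)
    rw [h4, mul_one] at h3
    linarith


end SpecAux

section GraphAux
set_option linter.unusedSectionVars false
variable {V : Type*} {G : SimpleGraph V} {u v : V}

lemma kelmans_adj_u (huv : u ≠ v) (hnadj : ¬G.Adj u v) (b : V) :
    (kelmans G u v).Adj u b ↔ G.Adj u b ∧ G.Adj v b := by
  have h1 : G.Adj u b ↔ G.Adj b u := G.adj_comm u b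
  have h2 : G.Adj v b ↔ G.Adj b v := G.adj_comm v b
  have h3 : ¬G.Adj v u := fun h => hnadj h.symm
  have h4 : ¬G.Adj u u := G.loopless.irrefl u
  have h5 : G.Adj u b → u ≠ b := fun h => h.ne
  have h6 : G.Adj u b → b ≠ v := fun h hb => hnadj (hb ▸ h)
  have h7 : G.Adj v b → b ≠ v := fun h hb => G.loopless.irrefl v (hb ▸ h)
  simp only [kelmans, SimpleGraph.fromRel_adj]
  tauto


lemma kelmans_adj_v (huv : u ≠ v) (hnadj : ¬G.Adj u v) (b : V) :
    (kelmans G u v).Adj v b ↔ G.Adj v b ∨ (G.Adj u b ∧ ¬G.Adj v b) := by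
  have h1 : G.Adj u b ↔ G.Adj b u := G.adj_comm u b
  have h2 : G.Adj v b ↔ G.Adj b v := G.adj_comm v b
  have h3 : ¬G.Adj v u := fun h => hnadj h.symm
  have h4 : ¬G.Adj v v := G.loopless.irrefl v
  have h5 : G.Adj v b → v ≠ b := fun h => h.ne
  have h6 : G.Adj u b → b ≠ v := fun h hb => hnadj (hb ▸ h)
  have h7 : G.Adj u b → b ≠ u := fun h hb => G.loopless.irrefl u (hb ▸ h)
  have h8 : ¬ (v = u) := Ne.symm huv
  have h9 : ¬ (v = b) ↔ ¬ (b = v) := by constructor <;> (intro h hh; exact h hh.symm)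
  simp only [kelmans, SimpleGraph.fromRel_adj, h8, h4, false_and, and_false, not_false_eq_true,
    true_and, and_true, or_false, false_or, ne_eq, not_true, not_not]
  tauto


lemma kelmans_adj_other {a b : V} (hau : a ≠ u) (hav : a ≠ v) (hbu : b ≠ u) (hbv : b ≠ v) :
    (kelmans G u v).Adj a b ↔ G.Adj a b := by
  have h1 : G.Adj a b ↔ G.Adj b a := G.adj_comm a b
  have h5 : G.Adj a b → a ≠ b := fun h => h.ne
  simp only [kelmans, SimpleGraph.fromRel_adj]
  tauto


lemma kelmans_eq_self (huv : u ≠ v) (hnadj : ¬G.Adj u v)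
    (hW : ∀ t, G.Adj u t → G.Adj v t) : kelmans G u v = G := by
  ext a b
  rcases eq_or_ne a u with h | hau
  · rw [h, kelmans_adj_u huv hnadj]
    exact ⟨fun h => h.1, fun h => ⟨h, hW b h⟩⟩
  rcases eq_or_ne a v with h | hav
  · rw [h, kelmans_adj_v huv hnadj]
    constructor
    · rintro (h | ⟨h1, h2⟩)
      · exact h
      · exact absurd (hW b h1) h2
    · exact Or.inl
  rcases eq_or_ne b u with h | hbu
  · rw [h, SimpleGraph.adj_comm, kelmans_adj_u huv hnadj, G.adj_comm a u]
    exact ⟨fun h => h.1, fun h => ⟨h, hW a h⟩⟩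
  rcases eq_or_ne b v with h | hbv
  · rw [h, SimpleGraph.adj_comm, kelmans_adj_v huv hnadj, G.adj_comm a v]
    constructor
    · rintro (h | ⟨h1, h2⟩)
      · exact h
      · exact absurd (hW a h1) h2
    · exact Or.inl
  · exact kelmans_adj_other hau hav hbu hbv


lemma kelmans_iso_swap (huv : u ≠ v) (hnadj : ¬G.Adj u v)
    (hNv : ∀ t, G.Adj v t → G.Adj u t) : Nonempty (G ≃g kelmans G u v) := by
  refine ⟨⟨Equiv.swap u v, ?_⟩⟩
  intro a b
  show (kelmans G u v).Adj (Equiv.swap u v a) (Equiv.swap u v b) ↔ G.Adj a b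
  have key : ∀ c, c ≠ u → c ≠ v →
      ((kelmans G u v).Adj v c ↔ G.Adj u c) ∧ ((kelmans G u v).Adj u c ↔ G.Adj v c) := by
    intro c hcu hcv
    constructor
    · rw [kelmans_adj_v huv hnadj]
      constructor
      · rintro (h | ⟨h1, h2⟩)
        · exact hNv c h
        · exact h1
      · intro h
        by_cases hv : G.Adj v c
        · exact Or.inl hv
        · exact Or.inr ⟨h, hv⟩
    · rw [kelmans_adj_u huv hnadj]
      exact ⟨fun h => h.2, fun h => ⟨hNv c h, h⟩⟩
  rcases eq_or_ne a u with h | hau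
  · rw [h, Equiv.swap_apply_left]
    rcases eq_or_ne b u with h2 | hbu
    · rw [h2, Equiv.swap_apply_left]
      simp
    rcases eq_or_ne b v with h2 | hbv
    · rw [h2, Equiv.swap_apply_right, kelmans_adj_v huv hnadj]
      constructor
      · rintro (hh | ⟨hh, _⟩)
        · exact absurd hh.symm hnadj
        · exact absurd hh (G.loopless.irrefl u)
      · intro hh; exact absurd hh hnadj
    · rw [Equiv.swap_apply_of_ne_of_ne hbu hbv]
      exact (key b hbu hbv).1
  rcases eq_or_ne a v with h | hav
  · rw [h, Equiv.swap_apply_right]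
    rcases eq_or_ne b u with h2 | hbu
    · rw [h2, Equiv.swap_apply_left, kelmans_adj_u huv hnadj]
      constructor
      · rintro ⟨hh, _⟩; exact absurd hh hnadj
      · intro hh; exact absurd hh.symm hnadj
    rcases eq_or_ne b v with h2 | hbv
    · rw [h2, Equiv.swap_apply_right]
      simp
    · rw [Equiv.swap_apply_of_ne_of_ne hbu hbv]
      exact (key b hbu hbv).2
  · rw [Equiv.swap_apply_of_ne_of_ne hau hav]
    rcases eq_or_ne b u with h2 | hbu
    · rw [h2, Equiv.swap_apply_left, SimpleGraph.adj_comm, G.adj_comm a u]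
      exact (key a hau hav).1
    rcases eq_or_ne b v with h2 | hbv
    · rw [h2, Equiv.swap_apply_right, SimpleGraph.adj_comm, G.adj_comm a v]
      exact (key a hau hav).2
    · rw [Equiv.swap_apply_of_ne_of_ne hbu hbv]
      exact kelmans_adj_other hau hav hbu hbv


variable [Fintype V] [DecidableEq V]

lemma kelmans_nbr_other (huv : u ≠ v) (hnadj : ¬G.Adj u v) {a : V} (hau : a ≠ u) (hav : a ≠ v) :
    (kelmans G u v).neighborFinset a =
      if G.Adj u a ∧ ¬G.Adj v a then insert v ((G.neighborFinset a).erase u)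
      else G.neighborFinset a := by
  ext b
  rw [SimpleGraph.mem_neighborFinset]
  by_cases hbu : b = u
  · rw [hbu]
    rw [SimpleGraph.adj_comm, kelmans_adj_u huv hnadj]
    by_cases hW : G.Adj u a ∧ ¬G.Adj v a
    · rw [if_pos hW]
      constructor
      · rintro ⟨h1, h2⟩; exact absurd h2 hW.2
      · intro hmem
        rcases Finset.mem_insert.mp hmem with h | h
        · exact absurd h huv
        · exact absurd rfl (Finset.mem_erase.mp h).1
    · rw [if_neg hW]
      rw [SimpleGraph.mem_neighborFinset, G.adj_comm a u]
      constructor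
      · rintro ⟨h1, h2⟩; exact h1
      · intro h; exact ⟨h, not_not.mp (fun hv => hW ⟨h, hv⟩)⟩
  · by_cases hbv : b = v
    · rw [hbv]
      rw [SimpleGraph.adj_comm, kelmans_adj_v huv hnadj]
      by_cases hW : G.Adj u a ∧ ¬G.Adj v a
      · rw [if_pos hW]
        constructor
        · intro _; exact Finset.mem_insert_self _ _
        · intro _; exact Or.inr hW
      · rw [if_neg hW, SimpleGraph.mem_neighborFinset, G.adj_comm a v]
        constructor
        · rintro (h | ⟨h1, h2⟩)
          · exact h
          · exact absurd ⟨h1, h2⟩ hW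
        · exact Or.inl
    · rw [kelmans_adj_other hau hav hbu hbv]
      by_cases hW : G.Adj u a ∧ ¬G.Adj v a
      · simp only [if_pos hW, Finset.mem_insert, Finset.mem_erase, SimpleGraph.mem_neighborFinset]
        constructor
        · intro h; exact Or.inr ⟨hbu, h⟩
        · rintro (h | ⟨h1, h2⟩)
          · exact absurd h hbv
          · exact h2
      · rw [if_neg hW, SimpleGraph.mem_neighborFinset]


lemma kelmans_degree_other (huv : u ≠ v) (hnadj : ¬G.Adj u v) {a : V} (hau : a ≠ u) (hav : a ≠ v) :
    (kelmans G u v).degree a = G.degree a := by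
  rw [SimpleGraph.degree, SimpleGraph.degree, kelmans_nbr_other huv hnadj hau hav]
  by_cases hW : G.Adj u a ∧ ¬G.Adj v a
  · rw [if_pos hW]
    have hv : v ∉ (G.neighborFinset a).erase u := by
      simp only [Finset.mem_erase, SimpleGraph.mem_neighborFinset]
      rintro ⟨h1, h2⟩
      exact hW.2 (G.adj_symm h2)
    have hu : u ∈ G.neighborFinset a := by
      rw [SimpleGraph.mem_neighborFinset]; exact G.adj_symm hW.1
    rw [Finset.card_insert_of_notMem hv, Finset.card_erase_of_mem hu]
    have : 1 ≤ (G.neighborFinset a).card := Finset.card_pos.mpr ⟨u, hu⟩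
    omega
  · rw [if_neg hW]


lemma kelmans_nbr_u (huv : u ≠ v) (hnadj : ¬G.Adj u v) :
    (kelmans G u v).neighborFinset u = G.neighborFinset u ∩ G.neighborFinset v := by
  ext b
  simp only [SimpleGraph.mem_neighborFinset, Finset.mem_inter, kelmans_adj_u huv hnadj]


lemma kelmans_nbr_v (huv : u ≠ v) (hnadj : ¬G.Adj u v) :
    (kelmans G u v).neighborFinset v =
      G.neighborFinset v ∪ (G.neighborFinset u \ G.neighborFinset v) := by
  ext b
  simp only [SimpleGraph.mem_neighborFinset, Finset.mem_union, Finset.mem_sdiff,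
    kelmans_adj_v huv hnadj]


lemma kelmans_degree_u (huv : u ≠ v) (hnadj : ¬G.Adj u v) :
    (kelmans G u v).degree u = (G.neighborFinset u ∩ G.neighborFinset v).card := by
  rw [SimpleGraph.degree, kelmans_nbr_u huv hnadj]


lemma kelmans_degree_v (huv : u ≠ v) (hnadj : ¬G.Adj u v) :
    (kelmans G u v).degree v = G.degree v + (G.neighborFinset u \ G.neighborFinset v).card := by
  rw [SimpleGraph.degree, kelmans_nbr_v huv hnadj, Finset.card_union_of_disjoint, SimpleGraph.degree]
  exact Finset.disjoint_sdiff


lemma degree_u_split :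
    G.degree u = (G.neighborFinset u ∩ G.neighborFinset v).card
      + (G.neighborFinset u \ G.neighborFinset v).card := by
  rw [SimpleGraph.degree, ← Finset.card_inter_add_card_sdiff (G.neighborFinset u) (G.neighborFinset v)]


end GraphAux

section MixAux
set_option linter.unusedSectionVars false
variable {V : Type*} [Fintype V] [DecidableEq V] {G : SimpleGraph V}

lemma degree_pos_of_connected (hconn : G.Connected) [Nontrivial V] (a : V) :
    0 < G.degree a := by
  rw [SimpleGraph.degree_pos_iff_exists_adj]
  obtain ⟨b, hb⟩ := exists_ne a
  obtain ⟨w⟩ := hconn.preconnected a b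
  cases w with
  | nil => exact absurd rfl hb
  | cons h p => exact ⟨_, h⟩

-- convexity shift

lemma convex_shift {g : ℝ → ℝ} (hg : ConvexOn ℝ Set.univ g) {a b w : ℝ}
    (hab : a ≤ b) (hw : 0 ≤ w) : g (a + w) + g b ≤ g a + g (b + w) := by
  rcases eq_or_lt_of_le hw with rfl | hw'
  · simp
  rcases eq_or_lt_of_le hab with rfl | hab'
  · simp [add_comm]
  set T : ℝ := b - a + w with hT
  have hT0 : 0 < T := by simp [hT]; linarith
  set θ : ℝ := w / T with hθ
  have hθ0 : 0 ≤ θ := by positivity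
  have hθ1 : θ ≤ 1 := by
    rw [hθ, div_le_one hT0]; simp [hT]; linarith
  have h1 : g (a + w) ≤ (1 - θ) * g a + θ * g (b + w) := by
    have := hg.2 (Set.mem_univ a) (Set.mem_univ (b + w)) (by linarith : (0:ℝ) ≤ 1 - θ) hθ0 (by ring)
    convert this using 2
    · rfl
    · rw [smul_eq_mul, smul_eq_mul]
      have hk : θ * T = w := by rw [hθ]; exact div_mul_cancel₀ _ hT0.ne'
      rw [hT] at hk
      linear_combination -hk
    · rfl
    · rfl
  have h2 : g b ≤ θ * g a + (1 - θ) * g (b + w) := by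
    have := hg.2 (Set.mem_univ a) (Set.mem_univ (b + w)) hθ0 (by linarith : (0:ℝ) ≤ 1 - θ) (by ring)
    convert this using 2
    · rfl
    · rw [smul_eq_mul, smul_eq_mul]
      have hk : θ * T = w := by rw [hθ]; exact div_mul_cancel₀ _ hT0.ne'
      rw [hT] at hk
      linear_combination hk
    · rfl
    · rfl
  linarith


lemma perron_positive (hconn : G.Connected) (A : Matrix V V ℝ) (lam : ℝ)
    (hAadj : ∀ a b, G.Adj a b → 0 < A a b) (hA0 : ∀ a b, ¬G.Adj a b → A a b = 0)
    (x : V → ℝ) (hx0 : ∀ i, 0 ≤ x i) (hxne : x ≠ 0) (hev : A *ᵥ x = lam • x) :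
    ∀ i, 0 < x i := by
  have hnn : ∀ a b, 0 ≤ A a b := by
    intro a b
    by_cases h : G.Adj a b
    · exact (hAadj a b h).le
    · exact (hA0 a b h).ge
  have step : ∀ a b, x a = 0 → G.Adj a b → x b = 0 := by
    intro a b ha hadj
    have hrow : ∑ t, A a t * x t = 0 := by
      have := congrFun hev a
      simp only [Matrix.mulVec, dotProduct, Pi.smul_apply, smul_eq_mul] at this
      rw [this, ha, mul_zero]
    have := (Finset.sum_eq_zero_iff_of_nonneg (fun t _ => mul_nonneg (hnn a t) (hx0 t))).mp
      hrow b (Finset.mem_univ b)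
    rcases mul_eq_zero.mp this with h | h
    · exact absurd h (ne_of_gt (hAadj a b hadj))
    · exact h
  have walk : ∀ a b, x a = 0 → G.Reachable a b → x b = 0 := by
    intro a b ha hr
    obtain ⟨w⟩ := hr
    induction w with
    | nil => exact ha
    | cons h p ih => exact ih (step _ _ ha h)
  intro i
  rcases lt_or_eq_of_le (hx0 i) with h | h
  · exact h
  · exfalso
    apply hxne
    ext b
    exact walk i b h.symm (hconn.preconnected i b)


lemma sum_split_pair {u v : V} (huv : u ≠ v) (g : V → ℝ) :
    ∑ i, g i = (∑ i ∈ Finset.univ \ {u, v}, g i) + (g u + g v) := by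
  have hsub : ({u, v} : Finset V) ⊆ Finset.univ := Finset.subset_univ _
  rw [← Finset.sum_sdiff hsub, Finset.sum_pair huv]


lemma double_sum_split {u v : V} (huv : u ≠ v) (h : V → V → ℝ)
    (hsy : ∀ i j, h i j = h j i)
    (hz : ∀ i j, i ≠ u → i ≠ v → j ≠ u → j ≠ v → h i j = 0)
    (huu : h u u = 0) (hvv : h v v = 0) (huv0 : h u v = 0) :
    ∑ i, ∑ j, h i j = 2 * ∑ t ∈ Finset.univ \ {u, v}, (h u t + h v t) := by
  have hrow : ∀ i, i ≠ u → i ≠ v → ∑ j, h i j = h i u + h i v := by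
    intro i hiu hiv
    rw [sum_split_pair huv (fun j => h i j)]
    have : ∑ j ∈ Finset.univ \ {u, v}, h i j = 0 :=
      Finset.sum_eq_zero fun j hj => by
        simp only [Finset.mem_sdiff, Finset.mem_insert, Finset.mem_singleton] at hj
        exact hz i j hiu hiv (fun hh => hj.2 (Or.inl hh)) (fun hh => hj.2 (Or.inr hh))
    rw [this, zero_add]
  have hrowu : ∑ j, h u j = ∑ t ∈ Finset.univ \ {u, v}, h u t := by
    rw [sum_split_pair huv (fun j => h u j), huu, huv0]; ring
  have hrowv : ∑ j, h v j = ∑ t ∈ Finset.univ \ {u, v}, h v t := by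
    rw [sum_split_pair huv (fun j => h v j), hvv, hsy v u, huv0]; ring
  rw [sum_split_pair huv (fun i => ∑ j, h i j), hrowu, hrowv]
  have : ∑ i ∈ Finset.univ \ {u, v}, ∑ j, h i j
      = ∑ i ∈ Finset.univ \ {u, v}, (h u i + h v i) := by
    apply Finset.sum_congr rfl
    intro i hi
    simp only [Finset.mem_sdiff, Finset.mem_insert, Finset.mem_singleton] at hi
    rw [hrow i (fun hh => hi.2 (Or.inl hh)) (fun hh => hi.2 (Or.inr hh)),
      hsy i u, hsy i v]
  rw [this, ← Finset.sum_add_distrib]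
  ring_nf


end MixAux

set_option maxHeartbeats 2000000 in
theorem stmt_13 {V : Type*} [Fintype V] [DecidableEq V]
    (f : ℝ → ℝ → ℝ)
    (hpos : ∀ x y : ℝ, 0 < x → 0 < y → 0 < f x y)
    (hsymm : ∀ x y : ℝ, f x y = f y x)
    (hmono : ∀ y : ℝ, Monotone fun x => f x y)
    (hconv : ∀ y : ℝ, ConvexOn ℝ Set.univ fun x => f x y)
    (G : SimpleGraph V) (hconn : G.Connected)
    (u v : V) (huv : u ≠ v) (hnadj : ¬G.Adj u v)
    (hconn' : (kelmans G u v).Connected)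
    (hniso : ¬Nonempty (G ≃g kelmans G u v)) :
    specRad (fAdj G f) < specRad (fAdj (kelmans G u v) f) := by
  classical
  haveI : Nonempty V := ⟨u⟩
  haveI : Nontrivial V := ⟨u, v, huv⟩
  by_cases hWall : ∀ t, G.Adj u t → G.Adj v t
  · refine absurd ?_ hniso
    rw [kelmans_eq_self huv hnadj hWall]
    exact ⟨SimpleGraph.Iso.refl⟩
  push_neg at hWall
  obtain ⟨t0, ht0u, ht0v⟩ := hWall
  have ht0nu : t0 ≠ u := fun h => G.loopless.irrefl u (h ▸ ht0u)
  have ht0nv : t0 ≠ v := fun h => hnadj (h ▸ ht0u)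
  -- degrees
  have hdegpos : ∀ t, 0 < G.degree t := degree_pos_of_connected hconn
  have hdeg'pos : ∀ t, 0 < (kelmans G u v).degree t := degree_pos_of_connected hconn'
  set nc : ℕ := (G.neighborFinset u ∩ G.neighborFinset v).card with hncdef
  set nw : ℕ := (G.neighborFinset u \ G.neighborFinset v).card with hnwdef
  have hdu_split : G.degree u = nc + nw := degree_u_split
  have hdeg'u : (kelmans G u v).degree u = nc := kelmans_degree_u huv hnadj
  have hdeg'v : (kelmans G u v).degree v = G.degree v + nw := kelmans_degree_v huv hnadj
  have hdeg'o : ∀ t, t ≠ u → t ≠ v → (kelmans G u v).degree t = G.degree t :=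
    fun t h1 h2 => kelmans_degree_other huv hnadj h1 h2
  have hnc_le : nc ≤ G.degree v := by
    have hh : G.degree v = (G.neighborFinset v).card := rfl
    rw [hh, hncdef]
    exact Finset.card_le_card Finset.inter_subset_right
  have hnc_pos : 0 < nc := hdeg'u ▸ hdeg'pos u
  -- matrices
  have hAsymm_ent : ∀ (H : SimpleGraph V) a b, fAdj H f a b = fAdj H f b a := by
    intro H a b
    unfold fAdj
    by_cases h : H.Adj a b
    · rw [if_pos h, if_pos h.symm, hsymm]
    · rw [if_neg h, if_neg (fun hh => h hh.symm)]
  have hherm : ∀ H : SimpleGraph V, (fAdj H f).IsHermitian := by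
    intro H
    ext a b
    rw [Matrix.conjTranspose_apply, star_trivial]
    exact hAsymm_ent H b a
  have hAposadj : ∀ (H : SimpleGraph V), (∀ t, 0 < H.degree t) →
      ∀ a b, H.Adj a b → 0 < fAdj H f a b := by
    intro H hd a b h
    unfold fAdj; rw [if_pos h]
    exact hpos _ _ (by exact_mod_cast hd a) (by exact_mod_cast hd b)
  have hAzero : ∀ (H : SimpleGraph V) a b, ¬H.Adj a b → fAdj H f a b = 0 := by
    intro H a b h; unfold fAdj; rw [if_neg h]
  have hAnn : ∀ (H : SimpleGraph V), (∀ t, 0 < H.degree t) → ∀ a b, 0 ≤ fAdj H f a b := by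
    intro H hd a b
    by_cases h : H.Adj a b
    · exact (hAposadj H hd a b h).le
    · rw [hAzero H a b h]
  have hAsym : (fAdj G f).IsHermitian := hherm G
  have hA'sym : (fAdj (kelmans G u v) f).IsHermitian := hherm (kelmans G u v)
  -- entry formulas
  have hAut : ∀ a b, fAdj G f a b =
      if G.Adj a b then f (G.degree a : ℝ) (G.degree b : ℝ) else 0 := fun a b => rfl
  have hA'ut : ∀ t, t ≠ u → t ≠ v → fAdj (kelmans G u v) f u t =
      if (G.Adj u t ∧ G.Adj v t) then f (nc : ℝ) (G.degree t : ℝ) else 0 := by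
    intro t h1 h2
    unfold fAdj
    by_cases h : G.Adj u t ∧ G.Adj v t
    · rw [if_pos ((kelmans_adj_u huv hnadj t).mpr h), if_pos h, hdeg'u, hdeg'o t h1 h2]
    · rw [if_neg (fun hh => h ((kelmans_adj_u huv hnadj t).mp hh)), if_neg h]
  have hcastv : (((kelmans G u v).degree v : ℕ) : ℝ) = (G.degree v : ℝ) + (nw : ℝ) := by
    rw [hdeg'v]; push_cast; ring
  have hA'vt : ∀ t, t ≠ u → t ≠ v → fAdj (kelmans G u v) f v t =
      if (G.Adj u t ∨ G.Adj v t) then f ((G.degree v : ℝ) + (nw : ℝ)) (G.degree t : ℝ) else 0 := by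
    intro t h1 h2
    unfold fAdj
    by_cases h : G.Adj u t ∨ G.Adj v t
    · have hadj' : (kelmans G u v).Adj v t := by
        rw [kelmans_adj_v huv hnadj]
        rcases h with h | h
        · by_cases hv : G.Adj v t
          · exact Or.inl hv
          · exact Or.inr ⟨h, hv⟩
        · exact Or.inl h
      rw [if_pos hadj', if_pos h, hcastv, hdeg'o t h1 h2]
    · push_neg at h
      have hna : ¬ (kelmans G u v).Adj v t := by
        rw [kelmans_adj_v huv hnadj]
        rintro (hh | ⟨hh, _⟩)
        · exact h.2 hh
        · exact h.1 hh
      rw [if_neg hna, if_neg (not_or.mpr ⟨h.1, h.2⟩)]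
  -- zero entries
  have hnadj'uv : ¬(kelmans G u v).Adj u v := by
    rw [kelmans_adj_u huv hnadj]
    rintro ⟨h1, _⟩; exact hnadj h1
  have hA'uu : fAdj (kelmans G u v) f u u = 0 := hAzero _ u u ((kelmans G u v).loopless.irrefl u)
  have hA'vv : fAdj (kelmans G u v) f v v = 0 := hAzero _ v v ((kelmans G u v).loopless.irrefl v)
  have hA'uv : fAdj (kelmans G u v) f u v = 0 := hAzero _ u v hnadj'uv
  have hA'vu : fAdj (kelmans G u v) f v u = 0 := by
    rw [hAsymm_ent]; exact hA'uv
  have hAuu : fAdj G f u u = 0 := hAzero _ u u (G.loopless.irrefl u)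
  have hAvv : fAdj G f v v = 0 := hAzero _ v v (G.loopless.irrefl v)
  have hAuv : fAdj G f u v = 0 := hAzero _ u v hnadj
  have hAvu : fAdj G f v u = 0 := by rw [hAsymm_ent]; exact hAuv
  -- spectral radius
  rw [specRad_eq_lamMax hAsym (hAnn G hdegpos),
      specRad_eq_lamMax hA'sym (hAnn (kelmans G u v) hdeg'pos)]
  by_contra hlt
  push_neg at hlt
  -- Perron vector
  obtain ⟨x, hxx, hxnn, hxev⟩ := exists_nonneg_eigenvec hAsym (hAnn G hdegpos)
  have hxne : x ≠ 0 := by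
    intro h
    rw [h] at hxx
    simp [dotProduct] at hxx
  have hxpos : ∀ i, 0 < x i :=
    perron_positive hconn (fAdj G f) (lamMax hAsym) (hAposadj G hdegpos) (hAzero G)
      x hxnn hxne hxev
  set p := min (x u) (x v) with hpdef
  set q := max (x u) (x v) with hqdef
  set y : V → ℝ := Function.update (Function.update x u p) v q with hydef
  have hyu : y u = p := by
    rw [hydef, Function.update_of_ne huv, Function.update_self]
  have hyv : y v = q := by rw [hydef, Function.update_self]
  have hyt : ∀ t, t ≠ u → t ≠ v → y t = x t := by
    intro t h1 h2
    rw [hydef, Function.update_of_ne h2, Function.update_of_ne h1]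
  have hp_pos : 0 < p := lt_min (hxpos u) (hxpos v)
  have hpq : p ≤ q := min_le_max
  have hor : (x u = p ∧ x v = q) ∨ (x u = q ∧ x v = p) := by
    rcases le_total (x u) (x v) with h | h
    · left; exact ⟨(min_eq_left h).symm, (max_eq_right h).symm⟩
    · right; exact ⟨(max_eq_left h).symm, (min_eq_right h).symm⟩
  have hyy : y ⬝ᵥ y = x ⬝ᵥ x := by
    unfold dotProduct
    rw [sum_split_pair huv (fun i => y i * y i), sum_split_pair huv (fun i => x i * x i)]
    have h1 : ∑ i ∈ Finset.univ \ {u, v}, y i * y i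
        = ∑ i ∈ Finset.univ \ {u, v}, x i * x i := by
      apply Finset.sum_congr rfl
      intro i hi
      simp only [Finset.mem_sdiff, Finset.mem_insert, Finset.mem_singleton] at hi
      rw [hyt i (fun h => hi.2 (Or.inl h)) (fun h => hi.2 (Or.inr h))]
    rw [h1, hyu, hyv]
    rcases hor with ⟨h1', h2'⟩ | ⟨h1', h2'⟩ <;> rw [h1', h2'] <;> ring
  -- the quadratic form inequality
  have hquad : lamMax hAsym * (y ⬝ᵥ y) ≤ y ⬝ᵥ (fAdj (kelmans G u v) f *ᵥ y) := by
    have hxAx : x ⬝ᵥ (fAdj G f *ᵥ x) = lamMax hAsym * (x ⬝ᵥ x) := by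
      rw [hxev, dotProduct_smul, smul_eq_mul]
    set h : V → V → ℝ := fun i j =>
      fAdj (kelmans G u v) f i j * y i * y j - fAdj G f i j * x i * x j with hhdef
    have hdiff : y ⬝ᵥ (fAdj (kelmans G u v) f *ᵥ y) - x ⬝ᵥ (fAdj G f *ᵥ x)
        = ∑ i, ∑ j, h i j := by
      unfold dotProduct Matrix.mulVec dotProduct
      rw [← Finset.sum_sub_distrib]
      apply Finset.sum_congr rfl; intro i _
      rw [Finset.mul_sum, Finset.mul_sum, ← Finset.sum_sub_distrib]
      apply Finset.sum_congr rfl; intro j _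
      rw [hhdef]; ring
    have hsy : ∀ i j, h i j = h j i := by
      intro i j
      rw [hhdef]
      simp only
      rw [hAsymm_ent (kelmans G u v) i j, hAsymm_ent G i j]
      ring
    have hz : ∀ i j, i ≠ u → i ≠ v → j ≠ u → j ≠ v → h i j = 0 := by
      intro i j hiu hiv hju hjv
      rw [hhdef]
      simp only
      have hentry : fAdj (kelmans G u v) f i j = fAdj G f i j := by
        unfold fAdj
        by_cases hadj : G.Adj i j
        · rw [if_pos ((kelmans_adj_other hiu hiv hju hjv).mpr hadj), if_pos hadj,
            hdeg'o i hiu hiv, hdeg'o j hju hjv]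
        · rw [if_neg (fun hh => hadj ((kelmans_adj_other hiu hiv hju hjv).mp hh)), if_neg hadj]
      rw [hentry, hyt i hiu hiv, hyt j hju hjv]
      ring
    have huu0 : h u u = 0 := by rw [hhdef]; simp only; rw [hA'uu, hAuu]; ring
    have hvv0 : h v v = 0 := by rw [hhdef]; simp only; rw [hA'vv, hAvv]; ring
    have huv0 : h u v = 0 := by rw [hhdef]; simp only; rw [hA'uv, hAuv]; ring
    have hsplit := double_sum_split huv h hsy hz huu0 hvv0 huv0
    have hterm : ∀ t ∈ Finset.univ \ ({u, v} : Finset V), 0 ≤ h u t + h v t := by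
      intro t ht
      simp only [Finset.mem_sdiff, Finset.mem_insert, Finset.mem_singleton] at ht
      have htu : t ≠ u := fun h' => ht.2 (Or.inl h')
      have htv : t ≠ v := fun h' => ht.2 (Or.inr h')
      rw [hhdef]
      simp only
      rw [hyt t htu htv, hyu, hyv, hA'ut t htu htv, hA'vt t htu htv, hAut u t, hAut v t]
      set s : ℝ := (G.degree t : ℝ) with hsdef
      have hspos : (0:ℝ) < s := by rw [hsdef]; exact_mod_cast hdegpos t
      set F1 : ℝ := f (nc : ℝ) s with hF1def
      set F2 : ℝ := f (G.degree u : ℝ) s with hF2def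
      set F3 : ℝ := f (G.degree v : ℝ) s with hF3def
      set F4 : ℝ := f ((G.degree v : ℝ) + (nw : ℝ)) s with hF4def
      have hrc_du : ((nc : ℝ)) ≤ (G.degree u : ℝ) := by
        exact_mod_cast (by omega : nc ≤ G.degree u)
      have hdu_eq : (G.degree u : ℝ) = (nc : ℝ) + (nw : ℝ) := by
        rw [hdu_split]; push_cast; ring
      have hrc_dv : ((nc : ℝ)) ≤ (G.degree v : ℝ) := by exact_mod_cast hnc_le
      have hm1 : F1 ≤ F2 := hmono s hrc_du
      have hm2 : F2 ≤ F4 := hmono s (by rw [hdu_eq]; linarith)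
      have hm3 : F3 ≤ F4 := hmono s (le_add_of_nonneg_right (Nat.cast_nonneg _))
      have hcx : F2 + F3 ≤ F1 + F4 := by
        have hcs := convex_shift (hconv s) hrc_dv (Nat.cast_nonneg _ : (0:ℝ) ≤ (nw : ℝ))
        rw [← hdu_eq] at hcs
        exact hcs
      have hF2pos : 0 < F2 :=
        hpos _ _ (by exact_mod_cast hdegpos u) hspos
      have hF4pos : 0 < F4 := lt_of_lt_of_le hF2pos hm2
      have hF1nn : 0 ≤ F1 :=
        (hpos _ _ (by exact_mod_cast hnc_pos) hspos).le
      have hF3nn : 0 ≤ F3 :=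
        (hpos _ _ (by exact_mod_cast hdegpos v) hspos).le
      have hxt : 0 < x t := hxpos t
      have hqpos : 0 < q := lt_of_lt_of_le hp_pos hpq
      by_cases hut : G.Adj u t <;> by_cases hvt : G.Adj v t
      · rw [if_pos (And.intro hut hvt), if_pos (Or.inl hut), if_pos hut, if_pos hvt]
        rcases hor with ⟨h1', h2'⟩ | ⟨h1', h2'⟩ <;> rw [h1', h2']
        · have hh1 : 0 ≤ (F4 - F3) * (q - p) * x t :=
            mul_nonneg (mul_nonneg (by linarith) (by linarith)) hxt.le
          have hh3 : 0 ≤ (F1 + F4 - F2 - F3) * p * x t :=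
            mul_nonneg (mul_nonneg (by linarith) hp_pos.le) hxt.le
          linarith [hh1, hh3]
        · have hh1 : 0 ≤ (F4 - F2) * (q - p) * x t :=
            mul_nonneg (mul_nonneg (by linarith) (by linarith)) hxt.le
          have hh3 : 0 ≤ (F1 + F4 - F2 - F3) * p * x t :=
            mul_nonneg (mul_nonneg (by linarith) hp_pos.le) hxt.le
          linarith [hh1, hh3]
      · rw [if_neg (fun hh => hvt hh.2), if_pos (Or.inl hut), if_pos hut, if_neg hvt]
        have hh1 : 0 ≤ (F4 - F2) * q * x t :=
          mul_nonneg (mul_nonneg (by linarith) hqpos.le) hxt.le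
        have hh2 : 0 ≤ F2 * (q - x u) * x t := by
          apply mul_nonneg _ hxt.le
          apply mul_nonneg hF2pos.le
          rcases hor with ⟨h1', _⟩ | ⟨h1', _⟩ <;> rw [h1'] <;> linarith
        linarith [hh1, hh2]
      · rw [if_neg (fun hh => hut hh.1), if_pos (Or.inr hvt), if_neg hut, if_pos hvt]
        have hh1 : 0 ≤ (F4 - F3) * q * x t :=
          mul_nonneg (mul_nonneg (by linarith) hqpos.le) hxt.le
        have hh2 : 0 ≤ F3 * (q - x v) * x t := by
          apply mul_nonneg _ hxt.le
          apply mul_nonneg hF3nn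
          rcases hor with ⟨_, h2'⟩ | ⟨_, h2'⟩ <;> rw [h2'] <;> linarith
        linarith [hh1, hh2]
      · rw [if_neg (fun hh => hut hh.1), if_neg hut,
          if_neg (fun hh : G.Adj u t ∨ G.Adj v t => hh.elim hut hvt), if_neg hvt]
        simp
    have hsum_nn : 0 ≤ ∑ t ∈ Finset.univ \ ({u, v} : Finset V), (h u t + h v t) :=
      Finset.sum_nonneg hterm
    have : 0 ≤ y ⬝ᵥ (fAdj (kelmans G u v) f *ᵥ y) - x ⬝ᵥ (fAdj G f *ᵥ x) := by
      rw [hdiff, hsplit]; linarith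
    rw [hyy]
    linarith [hxAx]
  -- conclude equality and eigen equation for y
  have hyy1 : y ⬝ᵥ y = 1 := by rw [hyy, hxx]
  have hray := rayleigh_le hA'sym y
  rw [hyy1, mul_one] at hray
  rw [hyy1, mul_one] at hquad
  have hlam_eq : lamMax hA'sym = lamMax hAsym := le_antisymm hlt (le_trans hquad hray)
  have hyAy : y ⬝ᵥ (fAdj (kelmans G u v) f *ᵥ y) = lamMax hA'sym * (y ⬝ᵥ y) := by
    rw [hyy1, mul_one, hlam_eq]
    exact le_antisymm (by rw [← hlam_eq]; exact hray) hquad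
  have hyev : fAdj (kelmans G u v) f *ᵥ y = lamMax hAsym • y := by
    have := rayleigh_eq_eigenvec hA'sym y hyAy
    rwa [hlam_eq] at this
  -- rows
  have hrowA'u : ∑ t, fAdj (kelmans G u v) f u t * y t = lamMax hAsym * y u := by
    have := congrFun hyev u
    simpa [Matrix.mulVec, dotProduct] using this
  have hrowA'v : ∑ t, fAdj (kelmans G u v) f v t * y t = lamMax hAsym * y v := by
    have := congrFun hyev v
    simpa [Matrix.mulVec, dotProduct] using this
  have hrowAu : ∑ t, fAdj G f u t * x t = lamMax hAsym * x u := by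
    have := congrFun hxev u
    simpa [Matrix.mulVec, dotProduct] using this
  rcases hor with ⟨h1, h2⟩ | ⟨h1, h2⟩
  · -- x u = p : contradiction via row u
    have e1 : ∑ t, fAdj (kelmans G u v) f u t * y t
        = ∑ t, fAdj (kelmans G u v) f u t * x t := by
      apply Finset.sum_congr rfl; intro t _
      rcases eq_or_ne t u with h' | htu
      · rw [h', hA'uu]; ring
      rcases eq_or_ne t v with h' | htv
      · rw [h', hA'uv]; ring
      · rw [hyt t htu htv]
    have hsum0 : ∑ t, (fAdj G f u t * x t - fAdj (kelmans G u v) f u t * x t) = 0 := by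
      rw [Finset.sum_sub_distrib, hrowAu, ← e1, hrowA'u, hyu, ← h1]
      ring
    have hnnterm : ∀ t ∈ Finset.univ,
        0 ≤ fAdj G f u t * x t - fAdj (kelmans G u v) f u t * x t := by
      intro t _
      have hle : fAdj (kelmans G u v) f u t ≤ fAdj G f u t := by
        rcases eq_or_ne t u with h' | htu
        · rw [h', hA'uu, hAuu]
        rcases eq_or_ne t v with h' | htv
        · rw [h', hA'uv, hAuv]
        rw [hA'ut t htu htv, hAut u t]
        by_cases h' : G.Adj u t ∧ G.Adj v t
        · rw [if_pos h', if_pos h'.1]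
          exact hmono _ (by exact_mod_cast (by omega : nc ≤ G.degree u))
        · rw [if_neg h']
          by_cases h'' : G.Adj u t
          · rw [if_pos h'']
            exact (hpos _ _ (by exact_mod_cast hdegpos u) (by exact_mod_cast hdegpos t)).le
          · rw [if_neg h'']
      linarith [mul_le_mul_of_nonneg_right hle (hxpos t).le]
    have hall := (Finset.sum_eq_zero_iff_of_nonneg hnnterm).mp hsum0 t0 (Finset.mem_univ t0)
    have hA't0 : fAdj (kelmans G u v) f u t0 = 0 := by
      rw [hA'ut t0 ht0nu ht0nv, if_neg (fun hh => ht0v hh.2)]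
    have hAt0 : 0 < fAdj G f u t0 := hAposadj G hdegpos u t0 ht0u
    rw [hA't0] at hall
    linarith [mul_pos hAt0 (hxpos t0)]
  · -- x u = q : contradiction via row v of A' vs row u of A, or isomorphism
    by_cases hNvu : ∀ t, G.Adj v t → G.Adj u t
    · exact absurd (kelmans_iso_swap huv hnadj hNvu) hniso
    push_neg at hNvu
    obtain ⟨t1, ht1v, ht1u⟩ := hNvu
    have ht1nu : t1 ≠ u := fun h => hnadj ((h ▸ ht1v).symm)
    have ht1nv : t1 ≠ v := fun h => G.loopless.irrefl v (h ▸ ht1v)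
    have e1 : ∑ t, fAdj (kelmans G u v) f v t * y t
        = ∑ t, fAdj (kelmans G u v) f v t * x t := by
      apply Finset.sum_congr rfl; intro t _
      rcases eq_or_ne t u with h' | htu
      · rw [h', hA'vu]; ring
      rcases eq_or_ne t v with h' | htv
      · rw [h', hA'vv]; ring
      · rw [hyt t htu htv]
    have hsum0 : ∑ t, (fAdj (kelmans G u v) f v t * x t - fAdj G f u t * x t) = 0 := by
      rw [Finset.sum_sub_distrib, hrowAu, ← e1, hrowA'v, hyv, ← h1]
      ring
    have hnnterm : ∀ t ∈ Finset.univ,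
        0 ≤ fAdj (kelmans G u v) f v t * x t - fAdj G f u t * x t := by
      intro t _
      have hle : fAdj G f u t ≤ fAdj (kelmans G u v) f v t := by
        rcases eq_or_ne t u with h' | htu
        · rw [h', hA'vu, hAuu]
        rcases eq_or_ne t v with h' | htv
        · rw [h', hA'vv, hAuv]
        rw [hA'vt t htu htv, hAut u t]
        by_cases h' : G.Adj u t
        · rw [if_pos h', if_pos (Or.inl h')]
          refine hmono _ ?_
          have : (G.degree u : ℝ) = (nc : ℝ) + (nw : ℝ) := by
            rw [hdu_split]; push_cast; ring
          have h2' : ((nc : ℝ)) ≤ (G.degree v : ℝ) := by exact_mod_cast hnc_le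
          rw [this]; linarith
        · rw [if_neg h']
          by_cases h'' : G.Adj u t ∨ G.Adj v t
          · rw [if_pos h'']
            have hF2pos : 0 < f (G.degree u : ℝ) (G.degree t : ℝ) :=
              hpos _ _ (by exact_mod_cast hdegpos u) (by exact_mod_cast hdegpos t)
            have hm2' : f (G.degree u : ℝ) (G.degree t : ℝ)
                ≤ f ((G.degree v : ℝ) + (nw : ℝ)) (G.degree t : ℝ) := by
              refine hmono _ ?_
              have : (G.degree u : ℝ) = (nc : ℝ) + (nw : ℝ) := by
                rw [hdu_split]; push_cast; ring
              have h2' : ((nc : ℝ)) ≤ (G.degree v : ℝ) := by exact_mod_cast hnc_le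
              rw [this]; linarith
            linarith
          · rw [if_neg h'']
      linarith [mul_le_mul_of_nonneg_right hle (hxpos t).le]
    have hall := (Finset.sum_eq_zero_iff_of_nonneg hnnterm).mp hsum0 t1 (Finset.mem_univ t1)
    have hAt1 : fAdj G f u t1 = 0 := hAzero G u t1 ht1u
    have hA't1 : 0 < fAdj (kelmans G u v) f v t1 := by
      rw [hA'vt t1 ht1nu ht1nv, if_pos (Or.inr ht1v)]
      have hF2pos : 0 < f (G.degree u : ℝ) (G.degree t1 : ℝ) :=
        hpos _ _ (by exact_mod_cast hdegpos u) (by exact_mod_cast hdegpos t1)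
      refine lt_of_lt_of_le hF2pos (hmono _ ?_)
      have : (G.degree u : ℝ) = (nc : ℝ) + (nw : ℝ) := by
        rw [hdu_split]; push_cast; ring
      have h2' : ((nc : ℝ)) ≤ (G.degree v : ℝ) := by exact_mod_cast hnc_le
      rw [this]; linarith
    rw [hAt1] at hall
    linarith [mul_pos hA't1 (hxpos t1)]
end
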